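/- arXiv:1606.09342 — 13 statements merged into one kernel-verified Lean document; each statement's English description precedes it below -/
import Mathlib

section
/- The core-EP decomposition of a square complex matrix is unique: if A = A₁ + A₂ = B₁ + B₂ with A₁, B₁ group-invertible, A₂^k = B₂^k = 0 (k = Ind(A)), A₁*A₂ = A₂A₁ = 0 and B₁*B₂ = B₂B₁ = 0, then A₁ = B₁ and A₂ = B₂. -/
open Matrix

namespace CoreEP

variable {I : Type*} [Fintype I] [DecidableEq I]

/-- `X` is the Moore-Penrose inverse of `A` (four Penrose equations). -/
def IsMPInv (A X : Matrix I I ℂ) : Prop :=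
  A * X * A = A ∧ X * A * X = X ∧ (A * X)ᴴ = A * X ∧ (X * A)ᴴ = X * A

/-- The column space of `X` is contained in the column space of `A`. -/
def rangeLE (X A : Matrix I I ℂ) : Prop :=
  LinearMap.range X.mulVecLin ≤ LinearMap.range A.mulVecLin

/-- `A` is group-invertible (index at most one): `rank (A²) = rank A`. -/
def GroupInvertible (A : Matrix I I ℂ) : Prop :=
  (A ^ 2).rank = A.rank

/-- `X` is the core inverse of `A`: `A X = A A†` and `range X ⊆ range A`. -/
def IsCoreInv (A X : Matrix I I ℂ) : Prop :=
  (∃ D, IsMPInv A D ∧ A * X = A * D) ∧ rangeLE X A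

/-- `X` is the core-EP inverse of `A` with index `k`. -/
def IsCoreEPInv (A X : Matrix I I ℂ) (k : ℕ) : Prop :=
  X * A ^ (k + 1) = A ^ k ∧ X * A * X = X ∧ (A * X)ᴴ = A * X ∧ rangeLE X (A ^ k)

/-- `k` is the index of `A`: the smallest `k` with `rank A^(k+1) = rank A^k`. -/
def HasIndex (A : Matrix I I ℂ) (k : ℕ) : Prop :=
  (A ^ (k + 1)).rank = (A ^ k).rank ∧ ∀ j, (A ^ (j + 1)).rank = (A ^ j).rank → k ≤ j

/-- `A = A₁ + A₂` is a core-EP decomposition with nilpotency exponent `k`. -/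
def IsCoreEPDecomp (A A₁ A₂ : Matrix I I ℂ) (k : ℕ) : Prop :=
  A = A₁ + A₂ ∧ GroupInvertible A₁ ∧ A₂ ^ k = 0 ∧ A₁ᴴ * A₂ = 0 ∧ A₂ * A₁ = 0

/-- The core-EP (pre-)order: `A^⊕ₑ A = A^⊕ₑ B` and `A A^⊕ₑ = B A^⊕ₑ`. -/
def CoreEPLE (A B : Matrix I I ℂ) : Prop :=
  ∃ k X, HasIndex A k ∧ IsCoreEPInv A X k ∧ X * A = X * B ∧ A * X = B * X

/-- The core partial order on group-invertible matrices. -/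
def CoreLE (A B : Matrix I I ℂ) : Prop :=
  GroupInvertible A ∧ GroupInvertible B ∧ ∃ X, IsCoreInv A X ∧ X * A = X * B ∧ A * X = B * X

/-- The minus partial order: `rank (B - A) = rank B - rank A`. -/
def MinusLE (A B : Matrix I I ℂ) : Prop :=
  (B - A).rank + A.rank = B.rank

/-- The core-minus order: core order on the group-invertible parts and
minus order on the nilpotent parts of the core-EP decompositions. -/
def CMLE (A B : Matrix I I ℂ) : Prop :=
  ∃ k l A₁ A₂ B₁ B₂, HasIndex A k ∧ HasIndex B l ∧
    IsCoreEPDecomp A A₁ A₂ k ∧ IsCoreEPDecomp B B₁ B₂ l ∧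
    CoreLE A₁ B₁ ∧ MinusLE A₂ B₂

/-!
Since `A₂ A₁ = 0` and `A₂ᵏ = 0`, we get `Aᵏ⁺¹ = A₁ Aᵏ` and `Aʲ A₁ = A₁ʲ⁺¹`, so group invertibility
of `A₁` makes its column space that of `Aᵏ⁺¹`; likewise for `B₁`. Hence `A₁` and `B₁` have the
same column space, and the orthogonality conditions `A₁ᴴ A₂ = 0`, `B₁ᴴ B₂ = 0` transfer to
`A₁ᴴ B₂ = 0`, `B₁ᴴ A₂ = 0`. Then `D = A₁ - B₁ = B₂ - A₂` satisfies `Dᴴ D = 0`, so `D = 0`.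
-/

theorem exists_mul_eq_of_range_le {m n p R : Type*} [CommSemiring R] [Fintype n] [DecidableEq n]
    [Fintype p] {X : Matrix m n R} {Y : Matrix m p R}
    (h : LinearMap.range X.mulVecLin ≤ LinearMap.range Y.mulVecLin) :
    ∃ C : Matrix p n R, X = Y * C := by
  have hcol : ∀ j, ∃ c, Y *ᵥ c = X.col j := fun j =>
    h ⟨Pi.single j 1, X.mulVec_single_one j⟩
  choose c hc using hcol
  exact ⟨(Matrix.of c)ᵀ, Matrix.ext fun i j => (congrFun (hc j) i).symm⟩

theorem conjTranspose_mul_eq_zero_of_range_le {m n p q R : Type*} [CommSemiring R] [StarRing R]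
    [Fintype m] [Fintype n] [DecidableEq n] [Fintype p] {X : Matrix m n R} {Y : Matrix m p R}
    {Z : Matrix m q R}
    (h : LinearMap.range X.mulVecLin ≤ LinearMap.range Y.mulVecLin) (hYZ : Yᴴ * Z = 0) :
    Xᴴ * Z = 0 := by
  obtain ⟨C, rfl⟩ := exists_mul_eq_of_range_le h
  rw [conjTranspose_mul, Matrix.mul_assoc, hYZ, Matrix.mul_zero]

theorem add_pow_mul_eq_pow_succ {R : Type*} [Semiring R] {a b : R} (hba : b * a = 0)
    (j : ℕ) : (a + b) ^ j * a = a ^ (j + 1) := by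
  induction j with
  | zero => simp
  | succ j ih =>
    have hb : b * a ^ (j + 1) = 0 := by rw [pow_succ', ← mul_assoc, hba, zero_mul]
    rw [pow_succ', mul_assoc, ih, add_mul, hb, add_zero, ← pow_succ']

theorem mul_add_pow_eq_pow_succ {R : Type*} [Semiring R] {a b : R} (hba : b * a = 0)
    (j : ℕ) : b * (a + b) ^ j = b ^ (j + 1) := by
  induction j with
  | zero => simp
  | succ j ih =>
    have hb : b ^ (j + 1) * a = 0 := by rw [pow_succ, mul_assoc, hba, mul_zero]
    rw [pow_succ, ← mul_assoc, ih, mul_add, hb, zero_add, ← pow_succ]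

theorem eq_of_add_eq_add_of_conjTranspose_mul_eq_zero {m n R : Type*} [Fintype m]
    [CommRing R] [PartialOrder R] [StarRing R] [StarOrderedRing R] [NoZeroDivisors R]
    {A₁ A₂ B₁ B₂ : Matrix m n R} (h : A₁ + A₂ = B₁ + B₂)
    (hAA : A₁ᴴ * A₂ = 0) (hAB : A₁ᴴ * B₂ = 0) (hBA : B₁ᴴ * A₂ = 0) (hBB : B₁ᴴ * B₂ = 0) :
    A₁ = B₁ := by
  have hdiff : A₁ - B₁ = B₂ - A₂ := by rw [sub_eq_sub_iff_add_eq_add, h, add_comm]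
  have : (A₁ - B₁)ᴴ * (A₁ - B₁) = 0 := calc
    _ = (A₁ - B₁)ᴴ * (B₂ - A₂) := by rw [← hdiff]
    _ = 0 := by
      simp only [conjTranspose_sub, Matrix.sub_mul, Matrix.mul_sub, hAA, hAB, hBA, hBB, sub_self]
  exact sub_eq_zero.mp (conjTranspose_mul_self_eq_zero.mp this)

theorem range_pow_succ_eq_of_groupInvertible {M : Matrix I I ℂ} (h : GroupInvertible M) (j : ℕ) :
    LinearMap.range (M ^ (j + 1)).mulVecLin = LinearMap.range M.mulVecLin := by
  have hsq : LinearMap.range (M ^ 2).mulVecLin = LinearMap.range M.mulVecLin := by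
    refine Submodule.eq_of_le_of_finrank_eq ?_ h
    rw [pow_two, mulVecLin_mul]
    exact LinearMap.range_comp_le_range _ _
  induction j with
  | zero => rw [pow_one]
  | succ j ih =>
    rw [pow_succ', mulVecLin_mul, LinearMap.range_comp, ih, ← LinearMap.range_comp,
      ← mulVecLin_mul, ← pow_two, hsq]

theorem IsCoreEPDecomp.range_mulVecLin_eq {A A₁ A₂ : Matrix I I ℂ} {k : ℕ}
    (h : IsCoreEPDecomp A A₁ A₂ k) :
    LinearMap.range A₁.mulVecLin = LinearMap.range (A ^ (k + 1)).mulVecLin := by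
  obtain ⟨rfl, hgi, hnil, -, hza⟩ := h
  have hpow : (A₁ + A₂) ^ (k + 1) = A₁ * (A₁ + A₂) ^ k := by
    rw [pow_succ', add_mul, mul_add_pow_eq_pow_succ hza, pow_succ, hnil, zero_mul, add_zero]
  apply le_antisymm
  · rw [← range_pow_succ_eq_of_groupInvertible hgi (k + 1), ← add_pow_mul_eq_pow_succ hza,
      mulVecLin_mul]
    exact LinearMap.range_comp_le_range _ _
  · rw [hpow, mulVecLin_mul]
    exact LinearMap.range_comp_le_range _ _

theorem core_ep_decomposition_unique_general {n : ℕ} (A A₁ A₂ B₁ B₂ : Matrix (Fin n) (Fin n) ℂ)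
    (k : ℕ)
    (hA : IsCoreEPDecomp A A₁ A₂ k) (hB : IsCoreEPDecomp A B₁ B₂ k) :
    A₁ = B₁ ∧ A₂ = B₂ := by
  have hrange := hA.range_mulVecLin_eq.trans hB.range_mulVecLin_eq.symm
  obtain ⟨hAsum, -, -, hAorth, -⟩ := hA
  obtain ⟨hBsum, -, -, hBorth, -⟩ := hB
  have hsum : A₁ + A₂ = B₁ + B₂ := hAsum.symm.trans hBsum
  have h₁ : A₁ = B₁ := by
    open ComplexOrder in
    exact eq_of_add_eq_add_of_conjTranspose_mul_eq_zero hsum hAorth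
      (conjTranspose_mul_eq_zero_of_range_le hrange.le hBorth)
      (conjTranspose_mul_eq_zero_of_range_le hrange.ge hAorth) hBorth
  exact ⟨h₁, add_left_cancel (h₁ ▸ hsum)⟩

/-- Uniqueness of the core-EP decomposition. -/
theorem core_ep_decomposition_unique {n : ℕ} (A A₁ A₂ B₁ B₂ : Matrix (Fin n) (Fin n) ℂ)
    (k : ℕ) (hk : HasIndex A k)
    (hA : IsCoreEPDecomp A A₁ A₂ k) (hB : IsCoreEPDecomp A B₁ B₂ k) :
    A₁ = B₁ ∧ A₂ = B₂ :=
  core_ep_decomposition_unique_general A A₁ A₂ B₁ B₂ k hA hB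

end CoreEP
end

section
/- If A = A₁ + A₂ is the core-EP decomposition of A ∈ ℂ^{n×n} with Ind(A) = k, then A₁ = A^k (A^k)^⊕ A and A₂ = A − A^k (A^k)^⊕ A, where (A^k)^⊕ denotes the core inverse of A^k. -/
/-!
`A^k (A^k)^⊕ = A^k (A^k)†` is the orthogonal projector onto `range A^k`. It fixes `A₁`, since
`range A₁ = range A₁^(k+1) = range (A^k A₁)` by group invertibility and `A₂ A₁ = 0`; and it
annihilates `A₂`, since `A₁ᴴ A₂ = 0` and `A₂ A₁ = 0` give `A₂ᴴ A^k = A₂ᴴ A₂^k = 0`.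
Hence `A^k (A^k)^⊕ A = A₁`.
-/

open Matrix

namespace CoreEP

variable {I : Type*} [Fintype I] [DecidableEq I]

section Ring

variable {R : Type*} [Ring R] {a b : R}

theorem mul_add_pow_of_mul_eq_zero (h : b * a = 0) (k : ℕ) : b * (a + b) ^ k = b ^ (k + 1) := by
  induction k with
  | zero => simp
  | succ k ih =>
    rw [pow_succ, ← mul_assoc, ih, mul_add, pow_succ b (k + 1), pow_succ b k, mul_assoc _ b a, h,
      mul_zero, zero_add]

theorem add_pow_mul_of_mul_eq_zero (h : b * a = 0) (k : ℕ) : (a + b) ^ k * a = a ^ (k + 1) := by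
  induction k with
  | zero => simp
  | succ k ih => rw [pow_succ, mul_assoc, add_mul, h, add_zero, ← mul_assoc, ih, ← pow_succ]

theorem star_mul_add_pow_of_mul_eq_zero [StarRing R] (horth : star a * b = 0) (h : b * a = 0)
    (k : ℕ) : star b * (a + b) ^ k = star b * b ^ k := by
  cases k with
  | zero => simp
  | succ k =>
    have hba : star b * a = 0 := by rw [← star_star a, ← star_mul, horth, star_zero]
    rw [pow_succ', add_mul, mul_add_pow_of_mul_eq_zero h, mul_add, ← mul_assoc, hba, zero_mul,
      zero_add]

end Ring

theorem mul_mul_eq_of_range_le {R J : Type*} [CommRing R] [Fintype J] [DecidableEq J]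
    {M D N : Matrix J J R} (hMDM : M * D * M = M)
    (hN : LinearMap.range N.mulVecLin ≤ LinearMap.range M.mulVecLin) : M * D * N = N := by
  refine Matrix.toLin'.injective (LinearMap.ext fun v => ?_)
  obtain ⟨w, hw⟩ := hN ⟨v, rfl⟩
  simp only [Matrix.toLin'_apply, ← Matrix.mulVec_mulVec]
  rw [← Matrix.mulVecLin_apply N v, ← hw, Matrix.mulVecLin_apply, Matrix.mulVec_mulVec,
    Matrix.mulVec_mulVec, hMDM]

theorem GroupInvertible.range_pow_succ {B : Matrix I I ℂ} (hB : GroupInvertible B) (j : ℕ) :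
    LinearMap.range (B ^ (j + 1)).mulVecLin = LinearMap.range B.mulVecLin := by
  have hsq : LinearMap.range (B * B).mulVecLin = LinearMap.range B.mulVecLin := by
    refine Submodule.eq_of_le_of_finrank_eq ?_ ?_
    · rw [Matrix.mulVecLin_mul]
      exact LinearMap.range_comp_le_range _ _
    · rw [← pow_two]
      exact hB
  induction j with
  | zero => simp
  | succ m ih =>
    rw [pow_succ' B (m + 1), Matrix.mulVecLin_mul, LinearMap.range_comp, ih,
      ← LinearMap.range_comp, ← Matrix.mulVecLin_mul, hsq]

theorem range_le_range_add_pow {A₁ A₂ : Matrix I I ℂ} (hA₁ : GroupInvertible A₁)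
    (h : A₂ * A₁ = 0) (k : ℕ) :
    LinearMap.range A₁.mulVecLin ≤ LinearMap.range ((A₁ + A₂) ^ k).mulVecLin := by
  rw [← hA₁.range_pow_succ k, ← add_pow_mul_of_mul_eq_zero h, Matrix.mulVecLin_mul]
  exact LinearMap.range_comp_le_range _ _

theorem core_ep_parts_formula_general {n : ℕ} (A A₁ A₂ X : Matrix (Fin n) (Fin n) ℂ) (k : ℕ)
    (hdec : IsCoreEPDecomp A A₁ A₂ k)
    (hX : IsCoreInv (A ^ k) X) :
    A₁ = A ^ k * X * A ∧ A₂ = A - A ^ k * X * A := by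
  obtain ⟨rfl, hA₁, hnil, horth, hzero⟩ := hdec
  obtain ⟨⟨D, ⟨hD, -, hDsymm, -⟩, hXD⟩, -⟩ := hX
  have hPA₁ : (A₁ + A₂) ^ k * D * A₁ = A₁ :=
    mul_mul_eq_of_range_le hD (range_le_range_add_pow hA₁ hzero k)
  have hPA₂ : (A₁ + A₂) ^ k * D * A₂ = 0 := by
    have h : A₂ᴴ * (A₁ + A₂) ^ k = 0 := by
      rw [← star_eq_conjTranspose, star_mul_add_pow_of_mul_eq_zero horth hzero, hnil, mul_zero]
    calc (A₁ + A₂) ^ k * D * A₂ = (A₂ᴴ * ((A₁ + A₂) ^ k * D))ᴴ := by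
          rw [conjTranspose_mul, conjTranspose_conjTranspose, hDsymm]
      _ = 0 := by rw [← mul_assoc, h, zero_mul, conjTranspose_zero]
  have key : (A₁ + A₂) ^ k * X * (A₁ + A₂) = A₁ := by
    rw [hXD, mul_add, hPA₁, hPA₂, add_zero]
  exact ⟨key.symm, by rw [key, add_sub_cancel_left]⟩

/-- The core-EP decomposition is given by `A₁ = A^k (A^k)^⊕ A` and
`A₂ = A - A^k (A^k)^⊕ A`. -/
theorem core_ep_parts_formula {n : ℕ} (A A₁ A₂ X : Matrix (Fin n) (Fin n) ℂ) (k : ℕ)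
    (hk : HasIndex A k) (hdec : IsCoreEPDecomp A A₁ A₂ k)
    (hX : IsCoreInv (A ^ k) X) :
    A₁ = A ^ k * X * A ∧ A₂ = A - A ^ k * X * A :=
  core_ep_parts_formula_general A A₁ A₂ X k hdec hX

end CoreEP
end

section
/- If A = A₁ + A₂ is the core-EP decomposition of A, then there exists a unitary matrix U such that A₁ = U [[T, S],[0,0]] U* and A₂ = U [[0,0],[0,N]] U*, where T is nonsingular and N is nilpotent. -/
/-!
Take an orthonormal basis of `ℂⁿ` whose first `r` vectors span `V = range A₁` and whose
remaining vectors span `Vᗮ`, and let `U` have these vectors as columns. The last rows of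
`Uᴴ A₁ U` vanish because `range A₁ = V`. The condition `A₁ᴴ A₂ = 0` says `range A₂ ⊆ Vᗮ`,
which kills the first rows of `Uᴴ A₂ U`, and `A₂ A₁ = 0` kills its first columns. Finally
`(Uᴴ A₁ U)² = [[T², T S], [0, 0]]` has rank `rank A₁² = rank A₁ = r`, which forces the
`r × r` block `T` to be invertible, and `N ^ k` is a corner of `Uᴴ A₂ ^ k U = 0`.
-/

open Matrix

open Module
open scoped InnerProductSpace

namespace Matrix

variable {α m n l o : Type*}

theorem eq_fromBlocks_zero_zero_of_apply_inr [Zero α] {M : Matrix (m ⊕ n) (l ⊕ o) α}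
    (h : ∀ i j, M (.inr i) j = 0) : M = fromBlocks M.toBlocks₁₁ M.toBlocks₁₂ 0 0 := by
  ext (i | i) (j | j)
  · rfl
  · rfl
  · exact h i _
  · exact h i _

theorem eq_fromBlocks_zero_zero_zero_of_apply_inl [Zero α] {M : Matrix (m ⊕ n) (l ⊕ o) α}
    (hrow : ∀ i j, M (.inl i) j = 0) (hcol : ∀ i j, M i (.inl j) = 0) :
    M = fromBlocks 0 0 0 M.toBlocks₂₂ := by
  ext (i | i) (j | j)
  · exact hrow i _
  · exact hrow i _
  · exact hcol _ j
  · rfl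

theorem isNilpotent_of_isNilpotent_fromBlocks_diagonal [Semiring α] [Fintype m] [Fintype n]
    [DecidableEq m] [DecidableEq n] {A : Matrix m m α} {D : Matrix n n α}
    (h : IsNilpotent (fromBlocks A 0 0 D)) : IsNilpotent D := by
  obtain ⟨k, hk⟩ := h
  refine ⟨k, ?_⟩
  rw [fromBlocks_diagonal_pow, ← fromBlocks_zero, fromBlocks_inj] at hk
  exact hk.2.2.2

section Conj

variable [CommRing α] [StarRing α] [Fintype m] [Fintype n] {P : Matrix m n α}

theorem conjTranspose_mul_mul_pow [DecidableEq m] [DecidableEq n] (hP : Pᴴ * P = 1)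
    (hP' : P * Pᴴ = 1) (C : Matrix m m α) (k : ℕ) : (Pᴴ * C * P) ^ k = Pᴴ * C ^ k * P := by
  induction k with
  | zero => simp [hP]
  | succ k ih =>
    calc (Pᴴ * C * P) ^ (k + 1) = Pᴴ * C ^ k * (P * Pᴴ) * C * P := by
          rw [pow_succ, ih]; simp only [Matrix.mul_assoc]
      _ = Pᴴ * C ^ (k + 1) * P := by simp only [hP', Matrix.mul_one, pow_succ, Matrix.mul_assoc]

theorem mul_conjTranspose_mul_mul_mul [DecidableEq m] (hP' : P * Pᴴ = 1) (C : Matrix m m α) :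
    P * (Pᴴ * C * P) * Pᴴ = C := by
  simp only [← Matrix.mul_assoc, hP', Matrix.one_mul]
  simp only [Matrix.mul_assoc, hP', Matrix.mul_one]

theorem rank_conjTranspose_mul_mul [DecidableEq m] [StrongRankCondition α] (hP' : P * Pᴴ = 1)
    (C : Matrix m m α) : (Pᴴ * C * P).rank = C.rank := by
  refine le_antisymm ((rank_mul_le_left _ _).trans (rank_mul_le_right _ _)) ?_
  calc C.rank = (P * (Pᴴ * C * P) * Pᴴ).rank := by rw [mul_conjTranspose_mul_mul_mul hP']
    _ ≤ (Pᴴ * C * P).rank := (rank_mul_le_left _ _).trans (rank_mul_le_right _ _)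

theorem submatrix_id_mem_unitaryGroup [DecidableEq m] (hP' : P * Pᴴ = 1) (e : m ≃ n) :
    P.submatrix id e ∈ unitaryGroup m α := by
  rw [mem_unitaryGroup_iff, star_eq_conjTranspose, conjTranspose_submatrix,
    submatrix_mul_equiv, hP', submatrix_id_id]

theorem submatrix_id_mul_submatrix_mul_conjTranspose (e : m ≃ n) (M : Matrix n n α) :
    P.submatrix id e * M.submatrix e e * (P.submatrix id e)ᴴ = P * M * Pᴴ := by
  rw [conjTranspose_submatrix, submatrix_mul_equiv, submatrix_mul_equiv, submatrix_id_id]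

end Conj

variable {K : Type*} [Field K] [Fintype m] [DecidableEq m]

theorem isUnit_det_of_rank_eq_card {T : Matrix m m K} (h : T.rank = Fintype.card m) :
    IsUnit T.det := by
  rw [← isUnit_iff_isUnit_det, ← mulVec_surjective_iff_isUnit]
  refine LinearMap.range_eq_top.mp
    (Submodule.eq_top_of_finrank_eq (S := LinearMap.range T.mulVecLin) ?_)
  rw [← Matrix.rank, h, finrank_fintype_fun_eq_card]

theorem isUnit_det_of_rank_fromBlocks_zero_zero_sq [Fintype l] [DecidableEq l]
    {T : Matrix m m K} {S : Matrix m l K}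
    (h : (fromBlocks T S (0 : Matrix l m K) 0 ^ 2).rank = Fintype.card m) : IsUnit T.det := by
  have hsq : fromBlocks T S (0 : Matrix l m K) 0 ^ 2 =
      fromRows (1 : Matrix m m K) (0 : Matrix l m K) * (T * fromCols T S) := by
    rw [sq, ← fromRows_fromCols_eq_fromBlocks, fromCols_zero, fromRows_mul, fromRows_mul,
      fromCols_mul_fromRows]
    simp
  refine isUnit_det_of_rank_eq_card (le_antisymm (rank_le_card_width T) ?_)
  rw [← h, hsq]
  exact (rank_mul_le_right _ _).trans (rank_mul_le_left _ _)

end Matrix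

section EuclideanSpace

variable {𝕜 : Type*} [RCLike 𝕜]

theorem exists_orthonormalBasis_sum_orthogonal {E : Type*} [NormedAddCommGroup E]
    [InnerProductSpace 𝕜 E] [FiniteDimensional 𝕜 E] (V : Submodule 𝕜 E) :
    ∃ b : OrthonormalBasis (Fin (finrank 𝕜 V) ⊕ Fin (finrank 𝕜 Vᗮ)) 𝕜 E,
      (∀ i, b (.inl i) ∈ V) ∧ ∀ j, b (.inr j) ∈ Vᗮ :=
  ⟨((stdOrthonormalBasis 𝕜 V).prod (stdOrthonormalBasis 𝕜 Vᗮ)).map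
    V.orthogonalDecomposition.symm, fun _ => by simp, fun _ => by simp⟩

variable {ι κ : Type*} [Fintype ι] [DecidableEq ι] [Fintype κ]

theorem Matrix.range_toEuclideanLin_le_orthogonal {A B : Matrix ι ι 𝕜} (h : Aᴴ * B = 0) :
    LinearMap.range (toEuclideanLin B) ≤ (LinearMap.range (toEuclideanLin A))ᗮ := by
  rw [LinearMap.orthogonal_range, ← toEuclideanLin_conjTranspose_eq_adjoint,
    LinearMap.range_le_ker_iff, ← toLpLin_mul_same, h, map_zero]

theorem Matrix.range_toEuclideanLin_le_ker {A B : Matrix ι ι 𝕜} (h : B * A = 0) :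
    LinearMap.range (toEuclideanLin A) ≤ LinearMap.ker (toEuclideanLin B) := by
  rw [LinearMap.range_le_ker_iff, ← toLpLin_mul_same, h, map_zero]

theorem Matrix.rank_eq_finrank_range_toEuclideanLin (A : Matrix ι ι 𝕜) :
    A.rank = finrank 𝕜 (LinearMap.range (toEuclideanLin A)) :=
  A.rank_eq_finrank_range_toLin (EuclideanSpace.basisFun ι 𝕜).toBasis
    (EuclideanSpace.basisFun ι 𝕜).toBasis

noncomputable abbrev OrthonormalBasis.columnMatrix
    (b : OrthonormalBasis κ 𝕜 (EuclideanSpace 𝕜 ι)) : Matrix ι κ 𝕜 :=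
  (EuclideanSpace.basisFun ι 𝕜).toBasis.toMatrix b

theorem OrthonormalBasis.conjTranspose_columnMatrix_mul_mul_apply
    (b : OrthonormalBasis κ 𝕜 (EuclideanSpace 𝕜 ι)) (C : Matrix ι ι 𝕜) (i j : κ) :
    (b.columnMatrixᴴ * C * b.columnMatrix) i j = ⟪b i, toEuclideanLin C (b j)⟫_𝕜 := by
  rw [Matrix.mul_assoc, ← inner_matrix_col_col]
  rfl

variable {κ₁ κ₂ : Type*} [Fintype κ₁] [Fintype κ₂]
  (b : OrthonormalBasis (κ₁ ⊕ κ₂) 𝕜 (EuclideanSpace 𝕜 ι))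
  {V : Submodule 𝕜 (EuclideanSpace 𝕜 ι)} {A : Matrix ι ι 𝕜}

theorem OrthonormalBasis.exists_conj_columnMatrix_eq_fromBlocks_zero_zero
    (hb : ∀ j, b (.inr j) ∈ Vᗮ) (hA : LinearMap.range (toEuclideanLin A) ≤ V) :
    ∃ T S, b.columnMatrixᴴ * A * b.columnMatrix = fromBlocks T S 0 0 := by
  refine ⟨_, _, eq_fromBlocks_zero_zero_of_apply_inr fun i j => ?_⟩
  rw [conjTranspose_columnMatrix_mul_mul_apply]
  exact Submodule.inner_left_of_mem_orthogonal (hA ⟨b j, rfl⟩) (hb i)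

theorem OrthonormalBasis.exists_conj_columnMatrix_eq_fromBlocks_zero_zero_zero
    (hb : ∀ i, b (.inl i) ∈ V) (hrange : LinearMap.range (toEuclideanLin A) ≤ Vᗮ)
    (hker : V ≤ LinearMap.ker (toEuclideanLin A)) :
    ∃ N, b.columnMatrixᴴ * A * b.columnMatrix = fromBlocks 0 0 0 N := by
  refine ⟨_, eq_fromBlocks_zero_zero_zero_of_apply_inl (fun i j => ?_) fun i j => ?_⟩
  · rw [conjTranspose_columnMatrix_mul_mul_apply]
    exact Submodule.inner_right_of_mem_orthogonal (hb i) (hrange ⟨b j, rfl⟩)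
  · rw [conjTranspose_columnMatrix_mul_mul_apply, hker (hb j), inner_zero_right]

end EuclideanSpace

namespace CoreEP

theorem core_ep_decomposition_block_form_general {n : ℕ} (A A₁ A₂ : Matrix (Fin n) (Fin n) ℂ)
    (k : ℕ) (hdec : IsCoreEPDecomp A A₁ A₂ k) :
    ∃ (r s : ℕ) (e : Fin n ≃ (Fin r ⊕ Fin s)) (U : Matrix (Fin n) (Fin n) ℂ)
      (T : Matrix (Fin r) (Fin r) ℂ) (S : Matrix (Fin r) (Fin s) ℂ)
      (N : Matrix (Fin s) (Fin s) ℂ),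
      U ∈ Matrix.unitaryGroup (Fin n) ℂ ∧ IsUnit T.det ∧ IsNilpotent N ∧
      A₁ = U * (Matrix.fromBlocks T S 0 0).submatrix e e * Uᴴ ∧
      A₂ = U * (Matrix.fromBlocks 0 0 0 N).submatrix e e * Uᴴ := by
  obtain ⟨-, hA₁, hA₂, horth, hzero⟩ := hdec
  obtain ⟨b, hbV, hbV'⟩ :=
    exists_orthonormalBasis_sum_orthogonal (LinearMap.range (toEuclideanLin A₁))
  set P := b.columnMatrix
  have hP : Pᴴ * P = 1 := OrthonormalBasis.toMatrix_orthonormalBasis_conjTranspose_mul_self _ b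
  have hP' : P * Pᴴ = 1 := OrthonormalBasis.toMatrix_orthonormalBasis_self_mul_conjTranspose _ b
  obtain ⟨T, S, hA₁P⟩ := b.exists_conj_columnMatrix_eq_fromBlocks_zero_zero hbV' le_rfl
  obtain ⟨N, hA₂P⟩ := b.exists_conj_columnMatrix_eq_fromBlocks_zero_zero_zero hbV
    (range_toEuclideanLin_le_orthogonal horth) (range_toEuclideanLin_le_ker hzero)
  have hT : IsUnit T.det := by
    refine isUnit_det_of_rank_fromBlocks_zero_zero_sq (S := S) ?_
    rw [← hA₁P, conjTranspose_mul_mul_pow hP hP', rank_conjTranspose_mul_mul hP', hA₁,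
      rank_eq_finrank_range_toEuclideanLin, Fintype.card_fin]
  have hN : IsNilpotent N := by
    have hA₂Pk : (Pᴴ * A₂ * P) ^ k = 0 := by
      rw [conjTranspose_mul_mul_pow hP hP', hA₂, Matrix.mul_zero, Matrix.zero_mul]
    rw [hA₂P] at hA₂Pk
    exact isNilpotent_of_isNilpotent_fromBlocks_diagonal ⟨k, hA₂Pk⟩
  set e := (b.toBasis.indexEquiv (EuclideanSpace.basisFun (Fin n) ℂ).toBasis).symm
  refine ⟨_, _, e, P.submatrix id e, T, S, N, submatrix_id_mem_unitaryGroup hP' e, hT, hN,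
    ?_, ?_⟩ <;> rw [submatrix_id_mul_submatrix_mul_conjTranspose]
  · rw [← hA₁P, mul_conjTranspose_mul_mul_mul hP']
  · rw [← hA₂P, mul_conjTranspose_mul_mul_mul hP']

/-- Block form of the core-EP decomposition: there is a unitary `U` with
`A₁ = U [[T,S],[0,0]] Uᴴ` and `A₂ = U [[0,0],[0,N]] Uᴴ`, `T` nonsingular, `N` nilpotent. -/
theorem core_ep_decomposition_block_form {n : ℕ} (A A₁ A₂ : Matrix (Fin n) (Fin n) ℂ)
    (k : ℕ) (hk : HasIndex A k) (hdec : IsCoreEPDecomp A A₁ A₂ k) :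
    ∃ (r s : ℕ) (e : Fin n ≃ (Fin r ⊕ Fin s)) (U : Matrix (Fin n) (Fin n) ℂ)
      (T : Matrix (Fin r) (Fin r) ℂ) (S : Matrix (Fin r) (Fin s) ℂ)
      (N : Matrix (Fin s) (Fin s) ℂ),
      U ∈ Matrix.unitaryGroup (Fin n) ℂ ∧ IsUnit T.det ∧ IsNilpotent N ∧
      A₁ = U * (Matrix.fromBlocks T S 0 0).submatrix e e * Uᴴ ∧
      A₂ = U * (Matrix.fromBlocks 0 0 0 N).submatrix e e * Uᴴ :=
  core_ep_decomposition_block_form_general A A₁ A₂ k hdec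

end CoreEP
end

section
/- Let A = A₁ + A₂ be the core-EP decomposition of A ∈ ℂ^{n×n} with Ind(A) = k. Then the core-EP inverse of A equals the core inverse of A₁: A^⊕ₑ = A₁^⊕. -/
open Matrix

namespace CoreEP

variable {I : Type*} [Fintype I] [DecidableEq I]

/-! The orthogonal projectors `A X` (onto `range A^k`) and `A₁ A₁†` (onto `range A₁`) absorb
each other, because `range A^k ⊆ range A₁ ⊆ range A^(k+1)`; being Hermitian, they are therefore
equal. Hence `A₁ X = A X = A₁ A₁† = A₁ Y`, and since `A₁` is injective on its own range (it has
index at most one) while `X` and `Y` both lie in that range, `X = Y`. -/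

lemma _root_.IsSelfAdjoint.eq_of_mul_eq_of_mul_eq {R : Type*} [Monoid R] [StarMul R] {p q : R}
    (hp : IsSelfAdjoint p) (hq : IsSelfAdjoint q) (hpq : p * q = q) (hqp : q * p = p) :
    q = p := by
  calc q = star q := hq.symm
    _ = star (p * q) := by rw [hpq]
    _ = q * p := by rw [star_mul, hp.star_eq, hq.star_eq]
    _ = p := hqp

lemma exists_eq_mul_of_rangeLE {X A : Matrix I I ℂ} (h : rangeLE X A) : ∃ U, X = A * U := by
  choose u hu using fun j => h ⟨Pi.single j 1, rfl⟩
  refine ⟨Matrix.of fun i j => u j i, ?_⟩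
  ext i j
  have hcol := congrFun (hu j) i
  simp only [mulVecLin_apply, mulVec_single, MulOpposite.op_one, one_smul,
    Matrix.col_apply] at hcol
  rw [← hcol]
  simp [Matrix.mul_apply, Matrix.mulVec, dotProduct]

namespace GroupInvertible

variable {A : Matrix I I ℂ} (hA : GroupInvertible A)
include hA

lemma range_sq : LinearMap.range (A ^ 2).mulVecLin = LinearMap.range A.mulVecLin := by
  refine Submodule.eq_of_le_of_finrank_eq ?_ hA
  rw [pow_two, mulVecLin_mul]
  exact LinearMap.range_comp_le_range _ _

lemma range_pow_succ_s4 (m : ℕ) :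
    LinearMap.range (A ^ (m + 1)).mulVecLin = LinearMap.range A.mulVecLin := by
  induction m with
  | zero => rw [pow_one]
  | succ m ih =>
    rw [pow_succ', mulVecLin_mul, LinearMap.range_comp, ih, ← LinearMap.range_comp,
      ← mulVecLin_mul, ← pow_two, hA.range_sq]

lemma exists_eq_pow_mul (m : ℕ) : ∃ S, A = A ^ (m + 1) * S :=
  exists_eq_mul_of_rangeLE (hA.range_pow_succ_s4 m).ge

lemma ker_sq : LinearMap.ker (A ^ 2).mulVecLin = LinearMap.ker A.mulVecLin := by
  have hle : LinearMap.ker A.mulVecLin ≤ LinearMap.ker (A ^ 2).mulVecLin := by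
    rw [pow_two, mulVecLin_mul]
    exact LinearMap.ker_le_ker_comp _ _
  refine (Submodule.eq_of_le_of_finrank_eq hle ?_).symm
  have h₁ := LinearMap.finrank_range_add_finrank_ker A.mulVecLin
  have h₂ := LinearMap.finrank_range_add_finrank_ker (A ^ 2).mulVecLin
  have hrank : (A ^ 2).rank = A.rank := hA
  rw [Matrix.rank, Matrix.rank] at hrank
  omega

lemma mul_eq_mul_of_mul_mul_eq {U V : Matrix I I ℂ} (h : A * (A * U) = A * (A * V)) :
    A * U = A * V := by
  rw [← sub_eq_zero, ← Matrix.mul_sub, ← Matrix.mul_sub] at h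
  rw [← sub_eq_zero, ← Matrix.mul_sub]
  refine ext_iff_mulVec.2 fun v => ?_
  have hv : (U - V) *ᵥ v ∈ LinearMap.ker (A ^ 2).mulVecLin := by
    rw [LinearMap.mem_ker, mulVecLin_apply, mulVec_mulVec, pow_two, Matrix.mul_assoc, h,
      zero_mulVec]
  rw [hA.ker_sq, LinearMap.mem_ker, mulVecLin_apply, mulVec_mulVec] at hv
  rw [hv, zero_mulVec]

end GroupInvertible

namespace IsCoreEPDecomp

variable {A A₁ A₂ : Matrix I I ℂ} {k : ℕ} (hdec : IsCoreEPDecomp A A₁ A₂ k)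
include hdec

lemma mul_part : A * A₁ = A₁ * A₁ := by
  rw [hdec.1, Matrix.add_mul, hdec.2.2.2.2, add_zero]

lemma pow_mul_part (j : ℕ) : A ^ j * A₁ = A₁ ^ (j + 1) := by
  induction j with
  | zero => simp
  | succ j ih =>
    rw [pow_succ, Matrix.mul_assoc, hdec.mul_part, ← Matrix.mul_assoc, ih, ← pow_succ]

lemma exists_pow_eq_part_mul_add (j : ℕ) : ∃ B, A ^ j = A₁ * B + A₂ ^ j := by
  induction j with
  | zero => exact ⟨0, by simp⟩
  | succ j ih =>
    obtain ⟨B, hB⟩ := ih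
    refine ⟨A₁ * B + A₂ ^ j, ?_⟩
    rw [pow_succ', hB, hdec.1, pow_succ', Matrix.add_mul, Matrix.mul_add, Matrix.mul_add,
      ← Matrix.mul_assoc A₂, hdec.2.2.2.2, Matrix.zero_mul, zero_add]

lemma exists_pow_eq_part_mul : ∃ B, A ^ k = A₁ * B := by
  obtain ⟨B, hB⟩ := hdec.exists_pow_eq_part_mul_add k
  exact ⟨B, by rw [hB, hdec.2.2.1, add_zero]⟩

lemma mul_mul_part_of_mul_pow_succ {X : Matrix I I ℂ} {j : ℕ} (h : X * A ^ (j + 1) = A ^ j) :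
    A * X * A₁ = A₁ := by
  obtain ⟨S, hS⟩ := hdec.2.1.exists_eq_pow_mul (j + 1)
  have hA₁ : A₁ = A ^ (j + 1) * (A₁ * S) := by
    rw [← Matrix.mul_assoc, hdec.pow_mul_part]
    exact hS
  calc A * X * A₁ = A * (X * A ^ (j + 1)) * (A₁ * S) := by
        rw [← Matrix.mul_assoc A X, Matrix.mul_assoc _ (A ^ _), ← hA₁]
    _ = A₁ := by rw [h, ← pow_succ', ← hA₁]

end IsCoreEPDecomp

theorem coreEP_inv_eq_core_inv_of_part_general {n : ℕ} (A A₁ A₂ X Y : Matrix (Fin n) (Fin n) ℂ)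
    (k : ℕ) (hdec : IsCoreEPDecomp A A₁ A₂ k)
    (hX : IsCoreEPInv A X k) (hY : IsCoreInv A₁ Y) :
    X = Y := by
  obtain ⟨⟨D, hD, hYD⟩, hYr⟩ := hY
  obtain ⟨U, rfl⟩ : ∃ U, X = A₁ * U := by
    obtain ⟨B, hB⟩ := hdec.exists_pow_eq_part_mul
    obtain ⟨V, rfl⟩ := exists_eq_mul_of_rangeLE hX.2.2.2
    exact ⟨B * V, by rw [hB, Matrix.mul_assoc]⟩
  obtain ⟨Z, rfl⟩ := exists_eq_mul_of_rangeLE hYr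
  have hAX : A * (A₁ * U) = A₁ * (A₁ * U) := by
    rw [← Matrix.mul_assoc, hdec.mul_part, Matrix.mul_assoc]
  have hproj : A * (A₁ * U) = A₁ * D :=
    IsSelfAdjoint.eq_of_mul_eq_of_mul_eq hD.2.2.1 hX.2.2.1
      (by rw [hAX, ← Matrix.mul_assoc, ← Matrix.mul_assoc, hD.1, Matrix.mul_assoc])
      (by rw [← Matrix.mul_assoc, hdec.mul_mul_part_of_mul_pow_succ hX.1])
  apply hdec.2.1.mul_eq_mul_of_mul_mul_eq
  rw [← hAX, hproj, hYD]

/-- The core-EP inverse of `A` equals the core inverse of the group-invertible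
part `A₁` of its core-EP decomposition. -/
theorem coreEP_inv_eq_core_inv_of_part {n : ℕ} (A A₁ A₂ X Y : Matrix (Fin n) (Fin n) ℂ)
    (k : ℕ) (hk : HasIndex A k) (hdec : IsCoreEPDecomp A A₁ A₂ k)
    (hX : IsCoreEPInv A X k) (hY : IsCoreInv A₁ Y) :
    X = Y :=
  coreEP_inv_eq_core_inv_of_part_general A A₁ A₂ X Y k hdec hX hY

end CoreEP
end

section
/- Let A ∈ ℂ^{n×n} with Ind(A) = k. Then A A^⊕ₑ = A^k (A^k)^⊕ = A^k (A^k)†, where A^⊕ₑ is the core-EP inverse of A. -/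
open Matrix

/-! Both `A A^⊕ₑ` and `A^k (A^k)†` are Hermitian idempotents, i.e. orthogonal projectors, and an
orthogonal projector is determined by its range. Both ranges are `range A^k`: for `A^k (A^k)†`
because `A^k (A^k)† A^k = A^k`; for `A X` because `range (A X) ⊆ A (range A^k) ⊆ range A^k` while
`rank A^k = rank (X A^(k+1)) ≤ rank X = rank (X (A X)) ≤ rank (A X)`. The same projector argument
shows that `A^k (A^k)†` does not depend on the choice of `(A^k)†`, which gives the core inverse. -/

theorem IsSelfAdjoint.eq_of_mul_eq_of_mul_eq_s6 {R : Type*} [Mul R] [StarMul R] {p q : R}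
    (hp : IsSelfAdjoint p) (hq : IsSelfAdjoint q) (hpq : p * q = q) (hqp : q * p = p) :
    p = q :=
  calc p = star (q * p) := by rw [hqp, hp.star_eq]
    _ = q := by rw [star_mul, hp.star_eq, hq.star_eq, hpq]

theorem Matrix.mul_eq_right_of_range_le {R m n : Type*} [CommSemiring R] [Fintype m]
    [Fintype n] {P : Matrix m n R} {Q : Matrix m m R}
    (hQ : IsIdempotentElem Q) (h : LinearMap.range P.mulVecLin ≤ LinearMap.range Q.mulVecLin) :
    Q * P = P := by
  have hQ' : IsIdempotentElem Q.mulVecLin := by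
    rw [IsIdempotentElem, Module.End.mul_eq_comp, ← Matrix.mulVecLin_mul, hQ.eq]
  have hQP := (LinearMap.IsIdempotentElem.comp_eq_right_iff hQ' P.mulVecLin).mpr h
  rw [← Matrix.mulVecLin_mul] at hQP
  exact Matrix.mulVec_injective (congrArg DFunLike.coe hQP)

theorem Matrix.range_mulVecLin_mul_le {R l m n : Type*} [CommSemiring R] [Fintype m]
    [Fintype n] (P : Matrix l m R) (Q : Matrix m n R) :
    LinearMap.range (P * Q).mulVecLin ≤ LinearMap.range P.mulVecLin := by
  rw [Matrix.mulVecLin_mul]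
  exact LinearMap.range_comp_le_range _ _

theorem Matrix.IsStarProjection.eq_of_range_eq {R m : Type*} [CommSemiring R] [StarRing R]
    [Fintype m] {P Q : Matrix m m R} (hP : IsStarProjection P)
    (hQ : IsStarProjection Q) (h : LinearMap.range P.mulVecLin = LinearMap.range Q.mulVecLin) :
    P = Q :=
  hP.isSelfAdjoint.eq_of_mul_eq_of_mul_eq_s6 hQ.isSelfAdjoint
    (Matrix.mul_eq_right_of_range_le hP.isIdempotentElem h.ge)
    (Matrix.mul_eq_right_of_range_le hQ.isIdempotentElem h.le)

namespace CoreEP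

variable {I : Type*} [Fintype I]

namespace IsMPInv

variable {A D : Matrix I I ℂ}

theorem isStarProjection (hD : IsMPInv A D) : IsStarProjection (A * D) where
  isIdempotentElem := by rw [IsIdempotentElem, ← mul_assoc, hD.1]
  isSelfAdjoint := hD.2.2.1

theorem range_mul (hD : IsMPInv A D) :
    LinearMap.range (A * D).mulVecLin = LinearMap.range A.mulVecLin := by
  refine le_antisymm (Matrix.range_mulVecLin_mul_le _ _) ?_
  conv_lhs => rw [← hD.1]
  exact Matrix.range_mulVecLin_mul_le _ _

theorem mul_eq {D' : Matrix I I ℂ} (hD : IsMPInv A D) (hD' : IsMPInv A D') : A * D = A * D' :=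
  hD.isStarProjection.eq_of_range_eq hD'.isStarProjection (hD.range_mul.trans hD'.range_mul.symm)

end IsMPInv

theorem IsCoreInv.mul_eq {A Y D : Matrix I I ℂ} (hY : IsCoreInv A Y) (hD : IsMPInv A D) :
    A * Y = A * D := by
  obtain ⟨⟨D', hD', hYD'⟩, -⟩ := hY
  rw [hYD', hD'.mul_eq hD]

namespace IsCoreEPInv

variable [DecidableEq I] {A X : Matrix I I ℂ} {k : ℕ}

theorem isStarProjection (hX : IsCoreEPInv A X k) : IsStarProjection (A * X) where
  isIdempotentElem := by rw [IsIdempotentElem, mul_assoc, ← mul_assoc X, hX.2.1]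
  isSelfAdjoint := hX.2.2.1

theorem range_mul (hX : IsCoreEPInv A X k) :
    LinearMap.range (A * X).mulVecLin = LinearMap.range (A ^ k).mulVecLin := by
  obtain ⟨hXA, hXAX, -, hXk⟩ := hX
  refine Submodule.eq_of_le_of_finrank_le ?_ ?_
  · calc LinearMap.range (A * X).mulVecLin
        = (LinearMap.range X.mulVecLin).map A.mulVecLin := by
          rw [Matrix.mulVecLin_mul, LinearMap.range_comp]
      _ ≤ (LinearMap.range (A ^ k).mulVecLin).map A.mulVecLin := Submodule.map_mono hXk
      _ = LinearMap.range (A ^ k * A).mulVecLin := by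
          rw [← pow_succ, pow_succ', Matrix.mulVecLin_mul, LinearMap.range_comp]
      _ ≤ LinearMap.range (A ^ k).mulVecLin := Matrix.range_mulVecLin_mul_le _ _
  · show (A ^ k).rank ≤ (A * X).rank
    calc (A ^ k).rank = (X * A ^ (k + 1)).rank := by rw [hXA]
      _ ≤ X.rank := Matrix.rank_mul_le_left _ _
      _ = (X * (A * X)).rank := by rw [← mul_assoc, hXAX]
      _ ≤ (A * X).rank := Matrix.rank_mul_le_right _ _

theorem mul_eq {D : Matrix I I ℂ} (hX : IsCoreEPInv A X k) (hD : IsMPInv (A ^ k) D) :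
    A * X = A ^ k * D :=
  hX.isStarProjection.eq_of_range_eq hD.isStarProjection (hX.range_mul.trans hD.range_mul.symm)

end IsCoreEPInv

theorem mul_coreEP_inv_eq_general {n : ℕ} (A X Y D : Matrix (Fin n) (Fin n) ℂ) (k : ℕ)
    (hX : IsCoreEPInv A X k)
    (hY : IsCoreInv (A ^ k) Y) (hD : IsMPInv (A ^ k) D) :
    A * X = A ^ k * Y ∧ A * X = A ^ k * D :=
  ⟨(hX.mul_eq hD).trans (hY.mul_eq hD).symm, hX.mul_eq hD⟩

/-- `A A^⊕ₑ = A^k (A^k)^⊕ = A^k (A^k)†`. -/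
theorem mul_coreEP_inv_eq {n : ℕ} (A X Y D : Matrix (Fin n) (Fin n) ℂ) (k : ℕ)
    (hk : HasIndex A k) (hX : IsCoreEPInv A X k)
    (hY : IsCoreInv (A ^ k) Y) (hD : IsMPInv (A ^ k) D) :
    A * X = A ^ k * Y ∧ A * X = A ^ k * D :=
  mul_coreEP_inv_eq_general A X Y D k hX hY hD

end CoreEP
end

section
/- Let A ∈ ℂ^{n×n} with Ind(A) = k and core-EP decomposition A = A₁ + A₂. Then A₁ = A A^⊕ₑ A and A₂ = A − A A^⊕ₑ A, where A^⊕ₑ is the core-EP inverse of A. -/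
open Matrix

/-!
Write `P = A X` for the orthogonal projector onto `range Aᵏ`. Since `A₂ A₁ = 0`, we get
`Aʲ A₁ = A₁ʲ⁺¹` and `A₂ Aʲ = A₂ʲ⁺¹`. Group invertibility of `A₁` gives `A₁ = A₁ᵏ⁺² Vᵏ⁺¹`, so
`A₁ = Aᵏ⁺¹ A₁ Vᵏ⁺¹` and `P A₁ = A₁`. On the other side `A₂ Aᵏ = A₂ᵏ⁺¹ = 0` and
`range X ⊆ range Aᵏ` give `A₂ X = 0`, so `P A₂ = Xᴴ Aᴴ A₂ = Xᴴ A₂ᴴ A₂ = (A₂ X)ᴴ A₂ = 0`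
by `A₁ᴴ A₂ = 0`. Hence `A X A = A₁`.
-/

theorem Matrix.exists_eq_mul_of_range_mulVecLin_le {R : Type*} [CommRing R] {m n p : Type*}
    [Fintype n] [Fintype p] [DecidableEq n] [DecidableEq p] {X : Matrix m n R} {B : Matrix m p R}
    (h : LinearMap.range X.mulVecLin ≤ LinearMap.range B.mulVecLin) :
    ∃ Y : Matrix p n R, X = B * Y := by
  obtain ⟨L, hL⟩ := Module.projective_lifting_property B.mulVecLin.rangeRestrict
    (X.mulVecLin.codRestrict _ fun v => h (LinearMap.mem_range_self _ v))
    B.mulVecLin.surjective_rangeRestrict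
  refine ⟨LinearMap.toMatrix' L, Matrix.toLin'.injective ?_⟩
  rw [Matrix.toLin'_mul, Matrix.toLin'_toMatrix']
  exact LinearMap.ext fun v => congrArg Subtype.val (LinearMap.congr_fun hL v).symm

theorem eq_pow_succ_mul_pow_of_eq_sq_mul {M : Type*} [Monoid M] {a v : M} (h : a = a ^ 2 * v) :
    ∀ j : ℕ, a = a ^ (j + 1) * v ^ j
  | 0 => by simp
  | j + 1 => by
    calc a = a ^ j * a * v ^ j := by rw [← pow_succ, ← eq_pow_succ_mul_pow_of_eq_sq_mul h j]
      _ = a ^ j * (a ^ 2 * v) * v ^ j := by rw [← h]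
      _ = a ^ (j + 2) * v ^ (j + 1) := by rw [pow_add, pow_succ' v]; simp only [mul_assoc]

theorem add_pow_mul_of_mul_eq_zero {R : Type*} [Semiring R] {b c : R} (h : c * b = 0) :
    ∀ j : ℕ, (b + c) ^ j * b = b ^ (j + 1)
  | 0 => by simp
  | j + 1 => by
    rw [pow_succ', mul_assoc, add_pow_mul_of_mul_eq_zero h j, add_mul, pow_succ' b j,
      ← mul_assoc c, h, zero_mul, add_zero, ← pow_succ', ← pow_succ']

theorem mul_add_pow_of_mul_eq_zero {R : Type*} [Semiring R] {b c : R} (h : c * b = 0) :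
    ∀ j : ℕ, c * (b + c) ^ j = c ^ (j + 1)
  | 0 => by simp
  | j + 1 => by
    rw [pow_succ, ← mul_assoc, mul_add_pow_of_mul_eq_zero h j, mul_add, pow_succ c j,
      mul_assoc _ c, h, mul_zero, zero_add, ← pow_succ, ← pow_succ]

namespace CoreEP

variable {I : Type*} [Fintype I] [DecidableEq I]

theorem GroupInvertible.exists_eq_sq_mul {A : Matrix I I ℂ} (h : GroupInvertible A) :
    ∃ V, A = A ^ 2 * V := by
  refine Matrix.exists_eq_mul_of_range_mulVecLin_le (Submodule.eq_of_le_of_finrank_le ?_ ?_).ge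
  · rw [sq, Matrix.mulVecLin_mul]
    exact LinearMap.range_comp_le_range _ _
  · exact h.ge

namespace IsCoreEPDecomp

variable {A A₁ A₂ X : Matrix I I ℂ} {k : ℕ}

theorem nilpotentPart_mul_eq_zero_of_rangeLE (hdec : IsCoreEPDecomp A A₁ A₂ k)
    {Y : Matrix I I ℂ} (hY : rangeLE Y (A ^ k)) : A₂ * Y = 0 := by
  obtain ⟨hsum, -, hnil, -, hzero⟩ := hdec
  obtain ⟨Z, rfl⟩ := Matrix.exists_eq_mul_of_range_mulVecLin_le hY
  rw [← mul_assoc, hsum, mul_add_pow_of_mul_eq_zero hzero, pow_succ, hnil, zero_mul, zero_mul]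

theorem mul_coreEPInv_mul_nilpotentPart (hdec : IsCoreEPDecomp A A₁ A₂ k)
    (hX : IsCoreEPInv A X k) : A * X * A₂ = 0 := by
  obtain ⟨-, -, hAX, hrange⟩ := hX
  have hA₂X : A₂ * X = 0 := hdec.nilpotentPart_mul_eq_zero_of_rangeLE hrange
  obtain ⟨hsum, -, -, horth, -⟩ := hdec
  have hAA₂ : Aᴴ * A₂ = A₂ᴴ * A₂ := by
    rw [hsum, Matrix.conjTranspose_add, add_mul, horth, zero_add]
  calc A * X * A₂ = Xᴴ * (Aᴴ * A₂) := by
        rw [← hAX, Matrix.conjTranspose_mul, mul_assoc]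
    _ = (A₂ * X)ᴴ * A₂ := by rw [hAA₂, Matrix.conjTranspose_mul, mul_assoc]
    _ = 0 := by rw [hA₂X, Matrix.conjTranspose_zero, zero_mul]

theorem mul_coreEPInv_mul_groupPart (hdec : IsCoreEPDecomp A A₁ A₂ k)
    (hX : IsCoreEPInv A X k) : A * X * A₁ = A₁ := by
  obtain ⟨hsum, hgroup, -, -, hzero⟩ := hdec
  obtain ⟨V, hV⟩ := hgroup.exists_eq_sq_mul
  have hA₁ : A₁ = A ^ (k + 1) * A₁ * V ^ (k + 1) := by
    rw [hsum, add_pow_mul_of_mul_eq_zero hzero, ← eq_pow_succ_mul_pow_of_eq_sq_mul hV]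
  have hP : A * X * A ^ (k + 1) = A ^ (k + 1) := by
    rw [mul_assoc, hX.1, ← pow_succ']
  rw [hA₁, ← mul_assoc, ← mul_assoc, hP]

end IsCoreEPDecomp

theorem core_ep_parts_via_coreEP_inv_general {n : ℕ} (A A₁ A₂ X : Matrix (Fin n) (Fin n) ℂ)
    (k : ℕ) (hdec : IsCoreEPDecomp A A₁ A₂ k)
    (hX : IsCoreEPInv A X k) :
    A₁ = A * X * A ∧ A₂ = A - A * X * A := by
  have hAXA : A * X * A = A₁ :=
    calc A * X * A = A * X * A₁ + A * X * A₂ := by rw [← mul_add, ← hdec.1]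
      _ = A₁ := by
        rw [hdec.mul_coreEPInv_mul_groupPart hX, hdec.mul_coreEPInv_mul_nilpotentPart hX, add_zero]
  exact ⟨hAXA.symm, hAXA ▸ eq_sub_of_add_eq' hdec.1.symm⟩

/-- The parts of the core-EP decomposition in terms of the core-EP inverse:
`A₁ = A A^⊕ₑ A` and `A₂ = A - A A^⊕ₑ A`. -/
theorem core_ep_parts_via_coreEP_inv {n : ℕ} (A A₁ A₂ X : Matrix (Fin n) (Fin n) ℂ)
    (k : ℕ) (hk : HasIndex A k) (hdec : IsCoreEPDecomp A A₁ A₂ k)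
    (hX : IsCoreEPInv A X k) :
    A₁ = A * X * A ∧ A₂ = A - A * X * A :=
  core_ep_parts_via_coreEP_inv_general A A₁ A₂ X k hdec hX

end CoreEP
end

section
/- Let A ∈ ℂ^{n×n} with Ind(A) = k. Then the core-EP inverse satisfies A^⊕ₑ = A^k (A^{k+1})^⊕, where (A^{k+1})^⊕ is the core inverse of A^{k+1}. -/
open Matrix

namespace CoreEP

variable {I : Type*} [Fintype I] [DecidableEq I]

/-!
Both `A X` and `A^{k+1} Y` are Hermitian idempotents with range `range A^{k+1}`, and a
Hermitian idempotent is determined by its range (if `P Q = Q` and `Q P = P` with `P, Q`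
self-adjoint, then `P = (Q P)ᴴ = P Q = Q`). Hence `A X = A^{k+1} Y`, and
`X = X A X = X A^{k+1} Y = A^k Y`.
-/

open LinearMap (range)

section Matrix

variable {R : Type*} [CommSemiring R] {l m n o : Type*} [Fintype m] [Fintype n]

theorem range_mulVecLin_mul_le (M : Matrix l m R) (N : Matrix m n R) :
    range (M * N).mulVecLin ≤ range M.mulVecLin := by
  rw [mulVecLin_mul]
  exact LinearMap.range_comp_le_range _ _

theorem range_mulVecLin_mul_mono [Fintype o] (M : Matrix l m R) {N : Matrix m n R}
    {K : Matrix m o R} (h : range N.mulVecLin ≤ range K.mulVecLin) :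
    range (M * N).mulVecLin ≤ range (M * K).mulVecLin := by
  rw [mulVecLin_mul, mulVecLin_mul, LinearMap.range_comp, LinearMap.range_comp]
  exact Submodule.map_mono h

theorem range_mulVecLin_mul_of_mul_mul_eq {M : Matrix m n R} {N : Matrix n m R}
    (h : M * N * M = M) : range (M * N).mulVecLin = range M.mulVecLin := by
  refine le_antisymm (range_mulVecLin_mul_le M N) ?_
  conv_lhs => rw [← h]
  exact range_mulVecLin_mul_le (M * N) M

theorem mul_eq_right_iff_range_mulVecLin_le {M : Matrix m m R} (hM : IsIdempotentElem M)
    (N : Matrix m n R) : M * N = N ↔ range N.mulVecLin ≤ range M.mulVecLin := by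
  have hM' : IsIdempotentElem M.mulVecLin := by
    rw [IsIdempotentElem, Module.End.mul_eq_comp, ← mulVecLin_mul, hM.eq]
  rw [← LinearMap.IsIdempotentElem.comp_eq_right_iff hM', ← mulVecLin_mul]
  exact ⟨congrArg _, fun h => mulVec_injective (congrArg DFunLike.coe h)⟩

end Matrix

theorem _root_.IsSelfAdjoint.eq_of_mul_eq_right {R : Type*} [Mul R] [StarMul R] {p q : R}
    (hp : IsSelfAdjoint p) (hq : IsSelfAdjoint q) (hpq : p * q = q) (hqp : q * p = p) :
    p = q :=
  calc p = star (q * p) := by rw [hqp, hp.star_eq]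
    _ = p * q := by rw [star_mul, hp.star_eq, hq.star_eq]
    _ = q := hpq

theorem eq_of_range_mulVecLin_eq {R m : Type*} [CommSemiring R] [StarRing R] [Fintype m]
    {P Q : Matrix m m R} (hP : IsStarProjection P) (hQ : IsStarProjection Q)
    (h : range P.mulVecLin = range Q.mulVecLin) : P = Q :=
  hP.isSelfAdjoint.eq_of_mul_eq_right hQ.isSelfAdjoint
    ((mul_eq_right_iff_range_mulVecLin_le hP.isIdempotentElem Q).2 h.ge)
    ((mul_eq_right_iff_range_mulVecLin_le hQ.isIdempotentElem P).2 h.le)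

section Inverses

variable {ι : Type*} [Fintype ι] {A X D : Matrix ι ι ℂ}

theorem IsMPInv.isStarProjection_mul (h : IsMPInv A D) : IsStarProjection (A * D) where
  isIdempotentElem := by rw [IsIdempotentElem, ← mul_assoc, h.1]
  isSelfAdjoint := h.2.2.1

theorem IsCoreInv.isStarProjection_mul (h : IsCoreInv A X) : IsStarProjection (A * X) := by
  obtain ⟨⟨D, hD, hAX⟩, -⟩ := h
  exact hAX ▸ hD.isStarProjection_mul

theorem IsCoreInv.range_mulVecLin_mul (h : IsCoreInv A X) :
    range (A * X).mulVecLin = range A.mulVecLin := by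
  obtain ⟨⟨D, hD, hAX⟩, -⟩ := h
  exact hAX ▸ range_mulVecLin_mul_of_mul_mul_eq hD.1

variable [DecidableEq ι]

theorem IsCoreEPInv.isStarProjection_mul {k : ℕ} (h : IsCoreEPInv A X k) :
    IsStarProjection (A * X) where
  isIdempotentElem := by rw [IsIdempotentElem, mul_assoc, ← mul_assoc X, h.2.1]
  isSelfAdjoint := h.2.2.1

theorem IsCoreEPInv.range_mulVecLin_mul {k : ℕ} (h : IsCoreEPInv A X k) :
    range (A * X).mulVecLin = range (A ^ (k + 1)).mulVecLin := by
  refine le_antisymm ?_ ?_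
  · simpa only [← pow_succ'] using range_mulVecLin_mul_mono A h.2.2.2
  · have hAX : A * X * A ^ (k + 1) = A ^ (k + 1) := by rw [mul_assoc, h.1, pow_succ']
    conv_lhs => rw [← hAX]
    exact range_mulVecLin_mul_le _ _

end Inverses

theorem coreEP_inv_eq_pow_mul_core_inv_general {n : ℕ} (A X Y : Matrix (Fin n) (Fin n) ℂ)
    (k : ℕ) (hX : IsCoreEPInv A X k)
    (hY : IsCoreInv (A ^ (k + 1)) Y) :
    X = A ^ k * Y := by
  have hAX : A * X = A ^ (k + 1) * Y :=
    eq_of_range_mulVecLin_eq hX.isStarProjection_mul hY.isStarProjection_mul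
      (hX.range_mulVecLin_mul.trans hY.range_mulVecLin_mul.symm)
  calc X = X * (A * X) := by rw [← mul_assoc, hX.2.1]
    _ = X * A ^ (k + 1) * Y := by rw [hAX, mul_assoc]
    _ = A ^ k * Y := by rw [hX.1]

/-- `A^⊕ₑ = A^k (A^{k+1})^⊕`. -/
theorem coreEP_inv_eq_pow_mul_core_inv {n : ℕ} (A X Y : Matrix (Fin n) (Fin n) ℂ)
    (k : ℕ) (hk : HasIndex A k) (hX : IsCoreEPInv A X k)
    (hY : IsCoreInv (A ^ (k + 1)) Y) :
    X = A ^ k * Y :=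
  coreEP_inv_eq_pow_mul_core_inv_general A X Y k hX hY

end CoreEP
end

section
/- For square matrices A, B of the same order with Ind(A) = k, the relation A ≤^⊕ₑ B (i.e., A^⊕ₑ A = A^⊕ₑ B and A A^⊕ₑ = B A^⊕ₑ) holds if and only if A^{k+1} = B A^k and A* A^k = B* A^k. -/
/-!
Since `X = A ^ k * Y` and `A ^ k = X * A ^ (k + 1)`, the matrices `X` and `A ^ k` generate the
same right ideal, so `M * X = N * X ↔ M * A ^ k = N * A ^ k`. The equation `X * A ^ (k + 1) = A ^ k`
also forces `rank A ^ k ≤ rank A ^ (k + 1)`, hence `A * X * A ^ k = A ^ k`: the Hermitian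
idempotent `A * X` is the orthogonal projector onto the range of `A ^ k`. Therefore `X`, `A * X`
and `(A ^ k)ᴴ` generate the same left ideal, and `X * M = X * N ↔ (A ^ k)ᴴ * M = (A ^ k)ᴴ * N`.
Taking `M, N = A, B` gives the two conditions.
-/

open Matrix

section Semigroup

variable {S : Type*} [Semigroup S] {x p : S}

theorem mul_eq_mul_right_iff_of_mutual_right_factors (hx : ∃ y, x = p * y)
    (hp : ∃ q, p = x * q) (m n : S) : m * x = n * x ↔ m * p = n * p := by
  obtain ⟨y, rfl⟩ := hx
  obtain ⟨q, hq⟩ := hp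
  constructor
  · intro h
    rw [hq, ← mul_assoc, h, mul_assoc]
  · intro h
    rw [← mul_assoc, h, mul_assoc]

theorem mul_eq_mul_left_iff_of_mutual_left_factors (hx : ∃ y, x = y * p)
    (hp : ∃ q, p = q * x) (m n : S) : x * m = x * n ↔ p * m = p * n := by
  obtain ⟨y, rfl⟩ := hx
  obtain ⟨q, hq⟩ := hp
  constructor
  · intro h
    rw [hq, mul_assoc, h, ← mul_assoc]
  · intro h
    rw [mul_assoc, h, ← mul_assoc]

end Semigroup

namespace Matrix

theorem exists_eq_mul_of_range_mulVecLin_le_s9 {R m n p : Type*} [CommSemiring R]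
    [Fintype n] [Fintype p] {A : Matrix m n R} {X : Matrix m p R}
    (h : LinearMap.range X.mulVecLin ≤ LinearMap.range A.mulVecLin) :
    ∃ Y : Matrix n p R, X = A * Y := by
  classical
  obtain ⟨g, hg⟩ := Module.projective_lifting_property A.mulVecLin.rangeRestrict
    (X.mulVecLin.codRestrict _ fun v => h ⟨v, rfl⟩) A.mulVecLin.surjective_rangeRestrict
  refine ⟨LinearMap.toMatrix' g, toLin'.injective ?_⟩
  rw [toLin'_mul, toLin'_toMatrix']
  exact congrArg (LinearMap.range A.mulVecLin).subtype.comp hg.symm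

theorem range_mulVecLin_mul_eq_of_rank_le {K m n p : Type*} [Field K] [Fintype n]
    [Fintype p] {M : Matrix m n K} {C : Matrix n p K} (h : M.rank ≤ (M * C).rank) :
    LinearMap.range (M * C).mulVecLin = LinearMap.range M.mulVecLin := by
  have hle : LinearMap.range (M * C).mulVecLin ≤ LinearMap.range M.mulVecLin := by
    rw [mulVecLin_mul]
    exact LinearMap.range_comp_le_range _ _
  exact Submodule.eq_of_le_of_finrank_le hle h

end Matrix

namespace CoreEP

variable {I : Type*} [Fintype I] [DecidableEq I] {A X : Matrix I I ℂ} {k : ℕ}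

theorem IsCoreEPInv.exists_eq_pow_mul (hX : IsCoreEPInv A X k) : ∃ Y, X = A ^ k * Y :=
  Matrix.exists_eq_mul_of_range_mulVecLin_le_s9 hX.2.2.2

theorem IsCoreEPInv.exists_pow_eq_pow_succ_mul (hX : IsCoreEPInv A X k) :
    ∃ C, A ^ k = A ^ (k + 1) * C := by
  have hrank : (A ^ k).rank ≤ (A ^ k * A).rank := by
    calc (A ^ k).rank = (X * (A ^ k * A)).rank := by rw [← pow_succ, hX.1]
      _ ≤ (A ^ k * A).rank := Matrix.rank_mul_le_right _ _
  rw [pow_succ]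
  exact Matrix.exists_eq_mul_of_range_mulVecLin_le_s9
    (Matrix.range_mulVecLin_mul_eq_of_rank_le hrank).ge

theorem IsCoreEPInv.mul_mul_pow (hX : IsCoreEPInv A X k) : A * X * A ^ k = A ^ k := by
  obtain ⟨C, hC⟩ := hX.exists_pow_eq_pow_succ_mul
  calc A * X * A ^ k = A * (X * A ^ (k + 1)) * C := by
        rw [hC]
        simp only [mul_assoc]
    _ = A ^ k := by rw [hX.1, ← pow_succ', ← hC]

theorem IsCoreEPInv.mul_eq_mul_right_iff (hX : IsCoreEPInv A X k) (M N : Matrix I I ℂ) :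
    M * X = N * X ↔ M * A ^ k = N * A ^ k :=
  mul_eq_mul_right_iff_of_mutual_right_factors hX.exists_eq_pow_mul
    ⟨A ^ (k + 1), hX.1.symm⟩ M N

theorem IsCoreEPInv.mul_eq_mul_left_iff (hX : IsCoreEPInv A X k) (M N : Matrix I I ℂ) :
    X * M = X * N ↔ (A ^ k)ᴴ * M = (A ^ k)ᴴ * N := by
  obtain ⟨Y, hY⟩ := hX.exists_eq_pow_mul
  have hXP : X = X * (A * X) := by rw [← mul_assoc, hX.2.1]
  have hP : A * X = Yᴴ * Aᴴ * (A ^ k)ᴴ := by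
    rw [← hX.2.2.1, hY, ← mul_assoc, ← pow_succ', pow_succ]
    simp only [conjTranspose_mul, mul_assoc]
  have hAdjPow : (A ^ k)ᴴ = (A ^ k)ᴴ * (A * X) := by
    conv_lhs => rw [← hX.mul_mul_pow, conjTranspose_mul, hX.2.2.1]
  calc X * M = X * N ↔ A * X * M = A * X * N :=
        mul_eq_mul_left_iff_of_mutual_left_factors ⟨X, hXP⟩ ⟨A, rfl⟩ M N
    _ ↔ (A ^ k)ᴴ * M = (A ^ k)ᴴ * N :=
        mul_eq_mul_left_iff_of_mutual_left_factors ⟨Yᴴ * Aᴴ, hP⟩ ⟨(A ^ k)ᴴ, hAdjPow⟩ M N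

theorem coreEP_order_iff_general {n : ℕ} (A B X : Matrix (Fin n) (Fin n) ℂ) (k : ℕ)
    (hX : IsCoreEPInv A X k) :
    (X * A = X * B ∧ A * X = B * X) ↔
      (A ^ (k + 1) = B * A ^ k ∧ Aᴴ * A ^ k = Bᴴ * A ^ k) := by
  have hAdjoint : (A ^ k)ᴴ * A = (A ^ k)ᴴ * B ↔ Aᴴ * A ^ k = Bᴴ * A ^ k := by
    rw [← conjTranspose_inj, conjTranspose_mul, conjTranspose_mul, conjTranspose_conjTranspose]
  rw [and_comm, hX.mul_eq_mul_right_iff, hX.mul_eq_mul_left_iff, hAdjoint, pow_succ']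

/-- Characterization of the core-EP order: `A ≤^⊕ₑ B` iff
`A^{k+1} = B A^k` and `Aᴴ A^k = Bᴴ A^k`, where `k = Ind A`. -/
theorem coreEP_order_iff {n : ℕ} (A B X : Matrix (Fin n) (Fin n) ℂ) (k : ℕ)
    (hk : HasIndex A k) (hX : IsCoreEPInv A X k) :
    (X * A = X * B ∧ A * X = B * X) ↔
      (A ^ (k + 1) = B * A ^ k ∧ Aᴴ * A ^ k = Bᴴ * A ^ k) :=
  coreEP_order_iff_general A B X k hX

end CoreEP
end

section
/- The core-EP order is a pre-order: it is reflexive and transitive on ℂ^{n×n}. -/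
open Matrix

namespace CoreEP

variable {I : Type*} [Fintype I] [DecidableEq I]

/-!
Reflexivity: every matrix has an index `k`, and `A ^ k * (A ^ (k + 1))†` is a core-EP inverse
of `A`.

Transitivity: let `X = A^⊕ₑ` with `X A = X B`, `A X = B X`, and `Y = B^⊕ₑ` with `Y B = Y C`,
`B Y = C Y`. As `A X` fixes the range of `X`, `B X X = X`, so `X = B ^ m * X ^ (m + 1)` for
every `m`; with `B ^ l = Y * B ^ (l + 1)` this puts the range of `X` inside that of `Y`, whence
`C X = B X`. Then `B Y * A X = A X`, and since both are orthogonal projectors also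
`A X * B Y = A X`, which gives `X C = X (A X) (B Y) C = X (A X) (B Y) B = X B`.
-/

open scoped ComplexOrder

omit [DecidableEq I] in
theorem rangeLE_iff_exists_mul_eq {X A : Matrix I I ℂ} : rangeLE X A ↔ ∃ Z, A * Z = X := by
  classical
  constructor
  · intro h
    choose w hw using fun j => h (LinearMap.mem_range_self X.mulVecLin (Pi.single j 1))
    refine ⟨(of w)ᵀ, ?_⟩
    ext i j
    have hij := congrFun (hw j) i
    simp only [mulVecLin_apply, mulVec_single_one] at hij
    simpa [mul_apply, mulVec, dotProduct] using hij
  · rintro ⟨Z, rfl⟩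
    rw [rangeLE, mulVecLin_mul]
    exact LinearMap.range_comp_le_range _ _

omit [DecidableEq I] in
theorem rangeLE_of_rank_le {M N : Matrix I I ℂ} (h : rangeLE N M) (hr : M.rank ≤ N.rank) :
    rangeLE M N :=
  (Submodule.eq_of_le_of_finrank_le h hr).ge

theorem exists_hasIndex (A : Matrix I I ℂ) : ∃ k, HasIndex A k := by
  classical
  obtain ⟨j, hj⟩ := WellFounded.not_rel_apply_succ (r := (· < ·)) fun j => (A ^ j).rank
  have hex : ∃ j, (A ^ (j + 1)).rank = (A ^ j).rank :=
    ⟨j, le_antisymm (pow_succ A j ▸ rank_mul_le_left _ _) (not_lt.mp hj)⟩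
  exact ⟨Nat.find hex, Nat.find_spec hex, fun j hj => Nat.find_min' hex hj⟩

-- `0⁻¹ = 0` in `ℝ` makes `x ↦ x⁻¹` the pseudo-inverse on the spectrum.
theorem exists_pinv_of_isHermitian {H : Matrix I I ℂ} (hH : H.IsHermitian) :
    ∃ W : Matrix I I ℂ, H * W * H = H ∧ W * H * W = W ∧ Wᴴ = W ∧ H * W = W * H := by
  have hfin : (spectrum ℝ H).Finite := hH.spectrum_real_eq_range_eigenvalues ▸ Set.finite_range _
  have hc (f : ℝ → ℝ) : ContinuousOn f (spectrum ℝ H) := hfin.continuousOn f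
  have hmul (f g : ℝ → ℝ) : cfc f H * cfc g H = cfc (fun x => f x * g x) H :=
    (cfc_mul f g H (hc f) (hc g)).symm
  have hHWH : cfc (fun x : ℝ => x) H * cfc (·⁻¹ : ℝ → ℝ) H * cfc (fun x : ℝ => x) H =
      cfc (fun x : ℝ => x) H := by
    simp only [hmul, mul_inv_mul_cancel]
  have hWHW : cfc (·⁻¹ : ℝ → ℝ) H * cfc (fun x : ℝ => x) H * cfc (·⁻¹ : ℝ → ℝ) H =
      cfc (·⁻¹ : ℝ → ℝ) H := by
    simp only [hmul]
    congr 1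
    funext x
    simpa using mul_inv_mul_cancel x⁻¹
  have hcomm := (cfc_commute_cfc (fun x : ℝ => x) (·⁻¹ : ℝ → ℝ) H).eq
  have hid : cfc (fun x : ℝ => x) H = H := cfc_id' ℝ H hH
  rw [hid] at hHWH hWHW hcomm
  exact ⟨cfc (·⁻¹ : ℝ → ℝ) H, hHWH, hWHW, cfc_predicate (R := ℝ) (p := IsSelfAdjoint) _ H, hcomm⟩

theorem exists_isMPInv (M : Matrix I I ℂ) : ∃ Y, IsMPInv M Y := by
  -- `M† = (Mᴴ * M)† * Mᴴ`
  obtain ⟨W, h1, h2, h3, h4⟩ := exists_pinv_of_isHermitian (isHermitian_conjTranspose_mul_self M)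
  have hM : M * (W * (Mᴴ * M)) = M := by
    have hz : (Mᴴ * M) * (W * (Mᴴ * M) - 1) = 0 := by
      rw [mul_sub, mul_one, ← Matrix.mul_assoc, h1, sub_self]
    rwa [conjTranspose_mul_self_mul_eq_zero, mul_sub, mul_one, sub_eq_zero] at hz
  refine ⟨W * Mᴴ, ?_, ?_, ?_, ?_⟩
  · simpa only [Matrix.mul_assoc] using hM
  · rw [Matrix.mul_assoc W, ← Matrix.mul_assoc, h2]
  · simp only [conjTranspose_mul, conjTranspose_conjTranspose, h3, Matrix.mul_assoc]
  · rw [Matrix.mul_assoc, conjTranspose_mul, (isHermitian_conjTranspose_mul_self M).eq, h3, h4]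

theorem rangeLE_pow_of_rank_pow_succ_eq {A : Matrix I I ℂ} {k : ℕ}
    (hk : (A ^ (k + 1)).rank = (A ^ k).rank) : rangeLE (A ^ k) (A ^ (k + 1)) :=
  rangeLE_of_rank_le (rangeLE_iff_exists_mul_eq.mpr ⟨A, (pow_succ A k).symm⟩) hk.ge

theorem exists_isCoreEPInv {A : Matrix I I ℂ} {k : ℕ}
    (hk : (A ^ (k + 1)).rank = (A ^ k).rank) : ∃ X, IsCoreEPInv A X k := by
  obtain ⟨Y, hY1, hY2, hY3, -⟩ := exists_isMPInv (A ^ (k + 1))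
  -- the row space of `A ^ k` is that of `A ^ (k + 1)`, on which `Y * A ^ (k + 1)` is the identity
  have hrow : rangeLE (A ^ k)ᴴ (A ^ (k + 1))ᴴ := by
    refine rangeLE_of_rank_le (rangeLE_iff_exists_mul_eq.mpr ⟨Aᴴ, ?_⟩) ?_
    · rw [pow_succ', conjTranspose_mul]
    · rw [rank_conjTranspose, rank_conjTranspose, hk]
  obtain ⟨Z, hZ⟩ := rangeLE_iff_exists_mul_eq.mp hrow
  have hAk : Zᴴ * A ^ (k + 1) = A ^ k := by
    simpa using congrArg conjTranspose hZ
  refine ⟨A ^ k * Y, ?_, ?_, ?_, rangeLE_iff_exists_mul_eq.mpr ⟨Y, rfl⟩⟩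
  · rw [← hAk, Matrix.mul_assoc, Matrix.mul_assoc, ← Matrix.mul_assoc (A ^ (k + 1)) Y, hY1]
  · rw [Matrix.mul_assoc, Matrix.mul_assoc, ← Matrix.mul_assoc A, ← pow_succ', ← Matrix.mul_assoc Y,
      hY2]
  · rw [← Matrix.mul_assoc, ← pow_succ', hY3]

theorem pow_mul_pow_succ_of_mul_mul_self {M : Type*} [Monoid M] {b x : M} (h : b * x * x = x) :
    ∀ m : ℕ, b ^ m * x ^ (m + 1) = x
  | 0 => by simp
  | m + 1 =>
    calc b ^ (m + 1) * x ^ (m + 1 + 1) = b ^ m * (b * x * x) * x ^ m := by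
          rw [pow_succ b, pow_succ' x (m + 1), pow_succ' x m]
          simp only [mul_assoc]
      _ = x := by rw [h, mul_assoc, ← pow_succ', pow_mul_pow_succ_of_mul_mul_self h m]

theorem IsCoreEPInv.mul_mul_self_eq {A X : Matrix I I ℂ} {k : ℕ}
    (hk : (A ^ (k + 1)).rank = (A ^ k).rank) (hX : IsCoreEPInv A X k) : A * X * X = X := by
  obtain ⟨Z, hZ⟩ := rangeLE_iff_exists_mul_eq.mp hX.2.2.2
  obtain ⟨W, hW⟩ := rangeLE_iff_exists_mul_eq.mp (rangeLE_pow_of_rank_pow_succ_eq hk)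
  calc A * X * X = A * (X * A ^ (k + 1)) * W * Z := by simp only [← hZ, ← hW, Matrix.mul_assoc]
    _ = X := by rw [hX.1, ← pow_succ', hW, hZ]

theorem CoreEPLE.refl (A : Matrix I I ℂ) : CoreEPLE A A := by
  obtain ⟨k, hk⟩ := exists_hasIndex A
  obtain ⟨X, hX⟩ := exists_isCoreEPInv hk.1
  exact ⟨k, X, hk, hX, rfl, rfl⟩

theorem CoreEPLE.trans {A B C : Matrix I I ℂ} (hAB : CoreEPLE A B) (hBC : CoreEPLE B C) :
    CoreEPLE A C := by
  obtain ⟨k, X, hk, hX, hXAB, hABX⟩ := hAB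
  obtain ⟨l, Y, -, ⟨hY1, hY2, hY3, -⟩, hYBC, hBCY⟩ := hBC
  have hBXX : B * X * X = X := hABX ▸ hX.mul_mul_self_eq hk.1
  obtain ⟨T, hT⟩ : ∃ T, Y * T = X := ⟨B ^ (l + 1) * X ^ (l + 1), by
    rw [← Matrix.mul_assoc, hY1, pow_mul_pow_succ_of_mul_mul_self hBXX]⟩
  have hCX : C * X = B * X := by rw [← hT, ← Matrix.mul_assoc, ← hBCY, Matrix.mul_assoc]
  have hYBX : Y * B * X = X := by rw [← hT, ← Matrix.mul_assoc, hY2]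
  have hQP : B * Y * (A * X) = A * X := by
    rw [hABX, Matrix.mul_assoc, ← Matrix.mul_assoc Y, hYBX]
  have hPQ : A * X * (B * Y) = A * X := by
    simpa only [conjTranspose_mul, hX.2.2.1, hY3] using congrArg conjTranspose hQP
  have hXC : X * C = X * B :=
    calc X * C = X * (A * X * (B * Y)) * C := by rw [hPQ, ← Matrix.mul_assoc, hX.2.1]
      _ = X * (A * X) * (B * (Y * C)) := by simp only [Matrix.mul_assoc]
      _ = X * (A * X * (B * Y)) * B := by rw [← hYBC]; simp only [Matrix.mul_assoc]
      _ = X * B := by rw [hPQ, ← Matrix.mul_assoc, hX.2.1]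
  exact ⟨k, X, hk, hX, hXAB.trans hXC.symm, hABX.trans hCX.symm⟩

/-- The core-EP order is a pre-order: reflexive and transitive. -/
theorem coreEP_order_preorder {n : ℕ} :
    (∀ A : Matrix (Fin n) (Fin n) ℂ, CoreEPLE A A) ∧
    (∀ A B C : Matrix (Fin n) (Fin n) ℂ, CoreEPLE A B → CoreEPLE B C → CoreEPLE A C) :=
  ⟨CoreEPLE.refl, fun _ _ _ => CoreEPLE.trans⟩

end CoreEP
end

section
/- The core-EP order is not antisymmetric: there exist 3×3 complex matrices A ≠ B with A ≤^⊕ₑ B and B ≤^⊕ₑ A. For example A = [[1,2,3],[0,0,0],[0,0,0]] and B = [[1,2,3],[0,0,1],[0,0,0]]. -/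
open Matrix

namespace CoreEP

variable {I : Type*} [Fintype I] [DecidableEq I]

/-!
`A` has index 1 and `B` has index 2, and `range A = range B² = span e₀`, so both have the same
core-EP inverse: the orthogonal projection `P = exP` onto `span e₀`. Since `P A = P B = A` and
`A P = B P = P`, each matrix lies below the other, although they differ in the nilpotent part.
-/

lemma rangeLE_of_mul_eq {n : Type*} [Fintype n] {X A : Matrix n n ℂ} (h : A * X = X) :
    rangeLE X A := by
  rintro y ⟨v, rfl⟩
  exact ⟨X *ᵥ v, by simp only [mulVecLin_apply, mulVec_mulVec, h]⟩

lemma pow_mul_eq_of_mul_eq {X A : Matrix I I ℂ} (h : A * X = X) (k : ℕ) : A ^ k * X = X := by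
  induction k with
  | zero => exact one_mul X
  | succ k ih => rw [pow_succ', mul_assoc, ih, h]

lemma hasIndex_of_rank_pow_lt {A : Matrix I I ℂ} {k : ℕ}
    (hk : (A ^ (k + 1)).rank = (A ^ k).rank) (hlt : ∀ j < k, (A ^ (j + 1)).rank < (A ^ j).rank) :
    HasIndex A k :=
  ⟨hk, fun j hj => not_lt.1 fun hjk => (hlt j hjk).ne hj⟩

lemma isCoreEPInv_of_isStarProjection {A X : Matrix I I ℂ} {k : ℕ} (hX : IsStarProjection X)
    (hAX : A * X = X) (hXA : X * A ^ (k + 1) = A ^ k) : IsCoreEPInv A X k :=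
  ⟨hXA, by rw [mul_assoc, hAX, hX.isIdempotentElem.eq],
    by rw [hAX, ← star_eq_conjTranspose, hX.isSelfAdjoint.star_eq],
    rangeLE_of_mul_eq (pow_mul_eq_of_mul_eq hAX k)⟩

def exA : Matrix (Fin 3) (Fin 3) ℂ := !![1, 2, 3; 0, 0, 0; 0, 0, 0]

def exB : Matrix (Fin 3) (Fin 3) ℂ := !![1, 2, 3; 0, 0, 1; 0, 0, 0]

def exP : Matrix (Fin 3) (Fin 3) ℂ := !![1, 0, 0; 0, 0, 0; 0, 0, 0]

lemma exA_sq : exA ^ 2 = exA := by rw [sq, exA, mul_fin_three]; norm_num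

lemma exB_sq : exB ^ 2 = !![1, 2, 5; 0, 0, 0; 0, 0, 0] := by rw [sq, exB, mul_fin_three]; norm_num

lemma exB_pow_three : exB ^ 3 = exB ^ 2 := by
  rw [pow_succ, exB_sq, exB, mul_fin_three]; norm_num

lemma isStarProjection_exP : IsStarProjection exP := by
  refine (isStarProjection_iff' ..).2 ⟨by rw [exP, mul_fin_three]; norm_num, ?_⟩
  ext i j; fin_cases i <;> fin_cases j <;> simp [exP]

lemma exP_mul_exA : exP * exA = exA := by rw [exP, exA, mul_fin_three]; norm_num

lemma exP_mul_exB : exP * exB = exA := by rw [exP, exA, exB, mul_fin_three]; norm_num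

lemma exP_mul_exB_sq : exP * exB ^ 2 = exB ^ 2 := by rw [exB_sq, exP, mul_fin_three]; norm_num

lemma exA_mul_exP : exA * exP = exP := by rw [exP, exA, mul_fin_three]; norm_num

lemma exB_mul_exP : exB * exP = exP := by rw [exP, exB, mul_fin_three]; norm_num

lemma rank_exA_le : exA.rank ≤ 1 :=
  rank_le_card_of_support_subset _ {0} <| Function.support_subset_iff'.2 fun i hi => by
    fin_cases i <;> simp_all [exA]

lemma rank_exB_le : exB.rank ≤ 2 :=
  rank_le_card_of_support_subset _ {0, 1} <| Function.support_subset_iff'.2 fun i hi => by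
    fin_cases i <;> simp_all [exB]

lemma rank_exB_sq_le : (exB ^ 2).rank ≤ 1 :=
  rank_le_card_of_support_subset _ {0} <| Function.support_subset_iff'.2 fun i hi => by
    fin_cases i <;> simp_all [exB_sq]

lemma two_le_rank_exB : 2 ≤ exB.rank := by
  have hminor : exB.submatrix ![0, 1] ![0, 2] = !![1, 3; 0, 1] := by
    ext i j; fin_cases i <;> fin_cases j <;> rfl
  calc 2 = (exB.submatrix ![0, 1] ![0, 2]).rank := by
        rw [hminor, rank_of_det_ne_zero (by simp [det_fin_two_of]), Fintype.card_fin]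
    _ ≤ exB.rank := rank_submatrix_le _ _ _

lemma hasIndex_exA : HasIndex exA 1 :=
  hasIndex_of_rank_pow_lt (by rw [exA_sq, pow_one]) fun j hj => by
    obtain rfl : j = 0 := by omega
    simpa using rank_exA_le.trans_lt (by norm_num)

lemma hasIndex_exB : HasIndex exB 2 :=
  hasIndex_of_rank_pow_lt (by rw [exB_pow_three]) fun j hj => by
    interval_cases j
    · simpa using rank_exB_le.trans_lt (by norm_num)
    · simpa using rank_exB_sq_le.trans_lt (lt_of_lt_of_le (by norm_num) two_le_rank_exB)

lemma coreEPLE_exA_exB : CoreEPLE exA exB :=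
  ⟨1, exP, hasIndex_exA,
    isCoreEPInv_of_isStarProjection isStarProjection_exP exA_mul_exP
      (by rw [exA_sq, pow_one, exP_mul_exA]),
    by rw [exP_mul_exA, exP_mul_exB], by rw [exA_mul_exP, exB_mul_exP]⟩

lemma coreEPLE_exB_exA : CoreEPLE exB exA :=
  ⟨2, exP, hasIndex_exB,
    isCoreEPInv_of_isStarProjection isStarProjection_exP exB_mul_exP
      (by rw [exB_pow_three, exP_mul_exB_sq]),
    by rw [exP_mul_exA, exP_mul_exB], by rw [exA_mul_exP, exB_mul_exP]⟩

lemma exA_ne_exB : exA ≠ exB := fun h => by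
  simpa [exA, exB] using congrFun (congrFun h 1) 2

/-- The core-EP order is not antisymmetric. -/
theorem coreEP_order_not_antisymm :
    ∃ A B : Matrix (Fin 3) (Fin 3) ℂ, A ≠ B ∧ CoreEPLE A B ∧ CoreEPLE B A ∧
      A = !![1, 2, 3; 0, 0, 0; 0, 0, 0] ∧ B = !![1, 2, 3; 0, 0, 1; 0, 0, 0] :=
  ⟨exA, exB, exA_ne_exB, coreEPLE_exA_exB, coreEPLE_exB_exA, rfl, rfl⟩

end CoreEP
end

section
/- For A = [[1,2,3],[0,0,0],[0,0,0]] and B = [[1,2,3],[0,0,1],[0,0,0]], one has A ≤^⊕ₑ B but not A ≤^D B (i.e., it fails that A^k B = B A^k = A^{k+1} with k = Ind(A) = 1), since AB ≠ BA while A² = AB would be required. -/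
open Matrix

namespace CoreEP

variable {I : Type*} [Fintype I] [DecidableEq I]

/-! `A` is an idempotent of rank one, so `Ind A = 1` and its core-EP inverse is the orthogonal
projector `X = e₁ e₁ᵀ` onto `range A = span e₁`. Since `A` and `B` share their first row and
their first column, `X A = X B` and `A X = B X = X`. Yet `A B ≠ B A`, whereas the Drazin order
with `k = 1` would force `A B = A² = B A`. -/

lemma hasIndex_one_of_isIdempotentElem {A : Matrix I I ℂ} (hA : IsIdempotentElem A)
    (hrank : A.rank ≠ Fintype.card I) : HasIndex A 1 := by
  refine ⟨by rw [hA.pow_succ_eq, pow_one], fun j hj => Nat.one_le_iff_ne_zero.mpr ?_⟩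
  rintro rfl
  rw [pow_one, pow_zero, rank_one] at hj
  exact hrank hj

lemma isCoreEPInv_one_of_isIdempotentElem {A X : Matrix I I ℂ} (hA : IsIdempotentElem A)
    (hXA : X * A = A) (hAX : A * X = X) (hX : Xᴴ = X) : IsCoreEPInv A X 1 := by
  refine ⟨by rw [hA.pow_succ_eq, hXA, pow_one], by rw [hXA, hAX], by rw [hAX, hX], ?_⟩
  rw [pow_one, ← hAX, rangeLE, mulVecLin_mul]
  exact LinearMap.range_comp_le_range _ _

/-- For `A = [[1,2,3],[0,0,0],[0,0,0]]` and `B = [[1,2,3],[0,0,1],[0,0,0]]`,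
`A ≤^⊕ₑ B` holds but the Drazin order `A ≤^D B` fails (`Ind A = 1` and `A B ≠ B A`). -/
theorem coreEP_order_not_drazin_order :
    let A : Matrix (Fin 3) (Fin 3) ℂ := !![1, 2, 3; 0, 0, 0; 0, 0, 0]
    let B : Matrix (Fin 3) (Fin 3) ℂ := !![1, 2, 3; 0, 0, 1; 0, 0, 0]
    CoreEPLE A B ∧ HasIndex A 1 ∧ A * B ≠ B * A ∧
      ¬(A ^ 1 * B = A ^ 2 ∧ B * A ^ 1 = A ^ 2) := by
  intro A B
  let X : Matrix (Fin 3) (Fin 3) ℂ := !![1, 0, 0; 0, 0, 0; 0, 0, 0]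
  obtain ⟨hA, hXA, hXB, hAX, hBX, hX⟩ : A * A = A ∧ X * A = A ∧ X * B = A ∧
      A * X = X ∧ B * X = X ∧ Xᴴ = X := by
    refine ⟨?_, ?_, ?_, ?_, ?_, ?_⟩ <;> rw [← Matrix.ext_iff] <;>
      simp [A, B, X, Fin.forall_fin_succ, mul_apply, Fin.sum_univ_three, conjTranspose_apply]
  have hAB : A * B ≠ B * A := by simp [A, B]
  have hrank : A.rank ≠ Fintype.card (Fin 3) := by
    have hA_outer : A = vecMulVec ![1, 0, 0] ![1, 2, 3] := by
      rw [← Matrix.ext_iff]; simp [A, Fin.forall_fin_succ, vecMulVec]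
    have hrank_le_one := hA_outer ▸ rank_vecMulVec_le (![1, 0, 0] : Fin 3 → ℂ) ![1, 2, 3]
    simp only [Fintype.card_fin]
    omega
  have hIdx := hasIndex_one_of_isIdempotentElem hA hrank
  refine ⟨⟨1, X, hIdx, isCoreEPInv_one_of_isIdempotentElem hA hXA hAX hX, hXA.trans hXB.symm,
    hAX.trans hBX.symm⟩, hIdx, hAB, ?_⟩
  rintro ⟨hAkB, hBAk⟩
  exact hAB (by simpa only [pow_one] using hAkB.trans hBAk.symm)

end CoreEP
end

section
/- The core-minus partial order implies the minus partial order: if A ≤^CM B then rank(B − A) = rank(B) − rank(A). -/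
open Matrix

/-!
Write `A = A₁ + A₂`, `B = B₁ + B₂` for the core-EP decompositions. The rank is additive over such a
decomposition: the column spaces of `A₁` and `A₂` are orthogonal since `A₁ᴴ A₂ = 0`, and both lie in
the column space of `A`. For `A₁` this holds because `A₁² = A A₁` and `A₁` has index one; for `A₂`
because index one gives `ker A₁ + range A₁ = ⊤`, while `A₂` kills `range A₁` and agrees with `A`
on `ker A₁`. The core inverse of `A₁` is an inner inverse, so the core order `A₁ ≤ B₁` gives the
minus order on the group parts. Subadditivity of the rank then yields
`rank (B - A) ≤ rank (B₁ - A₁) + rank (B₂ - A₂) = rank B - rank A ≤ rank (B - A)`.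
-/

open Module Submodule LinearMap
open scoped ComplexOrder

theorem LinearMap.codisjoint_ker_range_of_range_le_range_comp {R M : Type*} [Ring R]
    [AddCommGroup M] [Module R M] (f : M →ₗ[R] M) (h : range f ≤ range (f ∘ₗ f)) :
    Codisjoint (ker f) (range f) := by
  rw [codisjoint_iff, eq_top_iff]
  intro v _
  obtain ⟨w, hw⟩ := h ⟨v, rfl⟩
  refine mem_sup.2 ⟨v - f w, ?_, f w, ⟨w, rfl⟩, sub_add_cancel v (f w)⟩
  rw [mem_ker, map_sub, ← hw, comp_apply, sub_self]

namespace Matrix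

theorem range_mulVecLin_mul_le_s16 {l m n R : Type*} [Fintype m] [Fintype n] [CommSemiring R]
    (X : Matrix l m R) (Y : Matrix m n R) :
    range (X * Y).mulVecLin ≤ range X.mulVecLin := by
  rw [mulVecLin_mul]
  exact range_comp_le_range _ _

variable {m n K : Type*} [Fintype n] [Field K]

theorem rank_add_le (X Y : Matrix m n K) : (X + Y).rank ≤ X.rank + Y.rank := by
  refine (finrank_mono ?_).trans (finrank_add_le_finrank_add_finrank _ _)
  rw [mulVecLin_add]
  exact range_add_le _ _

theorem rank_add_eq_of_disjoint (X Y : Matrix m n K)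
    (hX : range X.mulVecLin ≤ range (X + Y).mulVecLin)
    (hY : range Y.mulVecLin ≤ range (X + Y).mulVecLin)
    (hXY : Disjoint (range X.mulVecLin) (range Y.mulVecLin)) :
    (X + Y).rank = X.rank + Y.rank := by
  have hsup : range (X + Y).mulVecLin = range X.mulVecLin ⊔ range Y.mulVecLin :=
    le_antisymm (mulVecLin_add X Y ▸ range_add_le _ _) (sup_le hX hY)
  rw [rank, rank, rank, hsup, ← finrank_sup_add_finrank_inf_eq, hXY.eq_bot, finrank_bot, add_zero]

/-- `A G` projects `range B` onto `range A` along `range (B - A)`. -/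
theorem rank_sub_add_rank_of_mul_eq [Fintype m] (A B : Matrix m n K) (G : Matrix n m K)
    (hAGA : A * G * A = A) (hGA : G * A = G * B) (hAG : A * G = B * G) :
    (B - A).rank + A.rank = B.rank := by
  have hA : A = B * (G * A) := by rw [← Matrix.mul_assoc, ← hAG, hAGA]
  have hAG_sub : ∀ y, (A * G) *ᵥ ((B - A) *ᵥ y) = 0 := by
    intro y
    rw [mulVec_mulVec, Matrix.mul_sub, Matrix.mul_assoc, Matrix.mul_assoc, ← hGA, sub_self,
      zero_mulVec]
  have hrangeA : range A.mulVecLin ≤ range B.mulVecLin := by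
    rw [hA]
    exact range_mulVecLin_mul_le_s16 _ _
  have hrangeBA : range (B - A).mulVecLin ≤ range B.mulVecLin := by
    rintro _ ⟨x, rfl⟩
    refine ⟨x - (G * A) *ᵥ x, ?_⟩
    simp only [mulVecLin_apply]
    rw [mulVec_sub, mulVec_mulVec, ← hA, sub_mulVec]
  have hdisj : Disjoint (range A.mulVecLin) (range (B - A).mulVecLin) := by
    rw [disjoint_def]
    rintro _ ⟨x, rfl⟩ ⟨y, hy⟩
    simp only [mulVecLin_apply] at hy ⊢
    rw [← hAGA, ← mulVec_mulVec, ← hy, hAG_sub]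
  have hsum := rank_add_eq_of_disjoint A (B - A)
  rw [add_sub_cancel] at hsum
  rw [hsum hrangeA hrangeBA hdisj, add_comm]

theorem disjoint_range_of_conjTranspose_mul_eq_zero {l : Type*} [Fintype m] [Fintype l]
    [StarRing K] [PartialOrder K] [StarOrderedRing K] {X : Matrix m n K} {Y : Matrix m l K}
    (h : Xᴴ * Y = 0) : Disjoint (range X.mulVecLin) (range Y.mulVecLin) := by
  rw [disjoint_def]
  rintro _ ⟨x, rfl⟩ ⟨y, hy⟩
  simp only [mulVecLin_apply] at hy ⊢
  refine dotProduct_star_self_eq_zero.1 ?_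
  nth_rewrite 2 [← hy]
  rw [star_mulVec, dotProduct_mulVec, vecMul_vecMul, h, vecMul_zero, zero_dotProduct]

end Matrix

namespace CoreEP

variable {I : Type*} [Fintype I] [DecidableEq I]

theorem GroupInvertible.range_mulVecLin_sq {A : Matrix I I ℂ} (hA : GroupInvertible A) :
    range (A ^ 2).mulVecLin = range A.mulVecLin :=
  eq_of_le_of_finrank_le (sq A ▸ range_mulVecLin_mul_le_s16 A A) hA.ge

theorem rank_add_eq_of_groupInvertible {A₁ A₂ : Matrix I I ℂ} (hg : GroupInvertible A₁)
    (ho : A₁ᴴ * A₂ = 0) (hn : A₂ * A₁ = 0) : (A₁ + A₂).rank = A₁.rank + A₂.rank := by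
  refine rank_add_eq_of_disjoint A₁ A₂ ?_ ?_ (disjoint_range_of_conjTranspose_mul_eq_zero ho)
  · rw [← hg.range_mulVecLin_sq, sq, ← add_zero (A₁ * A₁), ← hn, ← Matrix.add_mul]
    exact range_mulVecLin_mul_le_s16 _ _
  · have hcod := A₁.mulVecLin.codisjoint_ker_range_of_range_le_range_comp
      (by rw [← mulVecLin_mul, ← sq, hg.range_mulVecLin_sq])
    rintro _ ⟨y, rfl⟩
    obtain ⟨w, hw, _, ⟨z, rfl⟩, rfl⟩ := mem_sup.1 (hcod.eq_top ▸ mem_top : y ∈ _)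
    refine ⟨w, ?_⟩
    rw [mem_ker, mulVecLin_apply] at hw
    simp only [mulVecLin_apply, mulVec_add, mulVec_mulVec, hn, zero_mulVec, add_zero, add_mulVec,
      hw, zero_add]

theorem IsCoreEPDecomp.rank_eq {A A₁ A₂ : Matrix I I ℂ} {k : ℕ} (h : IsCoreEPDecomp A A₁ A₂ k) :
    A.rank = A₁.rank + A₂.rank := by
  obtain ⟨rfl, hg, -, ho, hn⟩ := h
  exact rank_add_eq_of_groupInvertible hg ho hn

theorem CoreLE.minusLE {A B : Matrix I I ℂ} (h : CoreLE A B) : MinusLE A B := by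
  obtain ⟨-, -, X, ⟨⟨D, hD, hAX⟩, -⟩, hXA, hAX'⟩ := h
  exact rank_sub_add_rank_of_mul_eq A B X (by rw [hAX, hD.1]) hXA hAX'

/-- The core-minus partial order implies the minus partial order. -/
theorem core_minus_implies_minus {n : ℕ} (A B : Matrix (Fin n) (Fin n) ℂ)
    (h : CMLE A B) : MinusLE A B := by
  obtain ⟨k, l, A₁, A₂, B₁, B₂, -, -, hA, hB, hcore, hminus⟩ := h
  have hgroup : MinusLE A₁ B₁ := hcore.minusLE
  have hsplit : (B - A).rank ≤ (B₁ - A₁).rank + (B₂ - A₂).rank := by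
    rw [hA.1, hB.1, add_sub_add_comm]
    exact rank_add_le _ _
  have hsub : B.rank ≤ (B - A).rank + A.rank := by
    simpa only [sub_add_cancel] using rank_add_le (B - A) A
  have hrankA := hA.rank_eq
  have hrankB := hB.rank_eq
  unfold MinusLE at hgroup hminus ⊢
  omega

end CoreEP
end

section
/- Let A, B ∈ ℂ^{n×n} both have index at most 1 (rank(A²) = rank(A), rank(B²) = rank(B)). Then A ≤^⊕ B (i.e., A^⊕A = A^⊕B and AA^⊕ = BA^⊕) if and only if A†A = A†B and A² = BA. -/
/-!
`A X = A A†` is the orthogonal projector onto `range A`, so `A X A = A` and `A A† X = X`; since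
`range A ∩ ker A = 0` for a matrix of index at most one, also `X A² = A`. These give
`A† = A† (A X)` and `X = X (A A†)`, which turn `X A = X B` into `A† A = A† B` and back, while
`A X = B X` and `A² = B A` are obtained from each other by multiplying with `A²` resp. `A† X`.
-/

open Matrix

namespace CoreEP

lemma mul_eq_mul_of_mul_mul_eq_self {S : Type*} [Semigroup S] {Y A B Z : S}
    (hY : Y * (A * Z) = Y) (h : Z * A = Z * B) : Y * A = Y * B :=
  calc Y * A = Y * (A * Z) * A := by rw [hY]
    _ = Y * A * (Z * A) := by simp only [mul_assoc]
    _ = Y * A * (Z * B) := by rw [h]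
    _ = Y * B := by rw [← mul_assoc, mul_assoc Y A Z, hY]

variable {I : Type*} [Fintype I] {A D D' X : Matrix I I ℂ}

lemma GroupInvertible.ker_mulVecLin_mul_self [DecidableEq I] (hA : GroupInvertible A) :
    LinearMap.ker (A * A).mulVecLin = LinearMap.ker A.mulVecLin := by
  refine (Submodule.eq_of_le_of_finrank_eq (fun v hv => ?_) ?_).symm
  · simp_all only [LinearMap.mem_ker, mulVecLin_apply, ← mulVec_mulVec, mulVec_zero]
  · have hA' : (A * A).rank = A.rank := by rw [← pow_two]; exact hA
    have := LinearMap.finrank_range_add_finrank_ker A.mulVecLin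
    have := LinearMap.finrank_range_add_finrank_ker (A * A).mulVecLin
    unfold Matrix.rank at hA'
    omega

lemma GroupInvertible.mul_eq_zero_of_mul_mul_eq_zero [DecidableEq I] (hA : GroupInvertible A)
    {N : Matrix I I ℂ} (h : A * (A * N) = 0) : A * N = 0 := by
  refine ext_iff_mulVec.2 fun v => ?_
  have hv : N *ᵥ v ∈ LinearMap.ker (A * A).mulVecLin := by
    simp [mulVec_mulVec, h]
  rw [hA.ker_mulVecLin_mul_self, LinearMap.mem_ker, mulVecLin_apply] at hv
  rw [← mulVec_mulVec, hv, zero_mulVec]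

lemma rangeLE.mul_eq_self (hX : rangeLE X A) {P : Matrix I I ℂ} (hP : P * A = A) :
    P * X = X := by
  refine ext_iff_mulVec.2 fun v => ?_
  obtain ⟨w, hw⟩ := hX (LinearMap.mem_range_self X.mulVecLin v)
  simp only [mulVecLin_apply] at hw
  rw [← mulVec_mulVec, ← hw, mulVec_mulVec, hP]

lemma IsMPInv.conjTranspose_mul_mul (hD : IsMPInv A D) : Aᴴ * (A * D) = Aᴴ := by
  conv_rhs => rw [← hD.1, conjTranspose_mul, hD.2.2.1]

lemma IsMPInv.mul_eq_mul (hD : IsMPInv A D) (hD' : IsMPInv A D') : A * D' = A * D :=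
  calc A * D' = D'ᴴ * (Aᴴ * (A * D)) := by
        rw [hD.conjTranspose_mul_mul, ← conjTranspose_mul, hD'.2.2.1]
    _ = (A * D')ᴴ * A * D := by simp only [conjTranspose_mul, mul_assoc]
    _ = A * D := by rw [hD'.2.2.1, hD'.1]

lemma IsCoreInv.mul_eq_mul (hX : IsCoreInv A X) (hD : IsMPInv A D) : A * X = A * D := by
  obtain ⟨⟨D', hD', hXD'⟩, -⟩ := hX
  rw [hXD', hD.mul_eq_mul hD']

lemma IsCoreInv.mul_mul_self [DecidableEq I] (hA : GroupInvertible A) (hX : IsCoreInv A X)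
    (hD : IsMPInv A D) : X * A * A = A := by
  have hAX : A * X * A = A := by rw [hX.mul_eq_mul hD, hD.1]
  set P := X * A * A - A
  -- `P` has its columns in `range A ∩ ker A`, which is trivial for a group-invertible `A`.
  have hP : A * (D * P) = P := by
    rw [← mul_assoc]
    simp only [P, mul_sub, ← mul_assoc, hX.2.mul_eq_self hD.1, hD.1]
  have hAP : A * P = 0 := by simp only [P, mul_sub, ← mul_assoc, hAX, sub_self]
  have : A * (D * P) = 0 := hA.mul_eq_zero_of_mul_mul_eq_zero (by rw [hP, hAP])
  rwa [hP, sub_eq_zero] at this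

theorem core_order_iff_mp_and_sq_general {n : ℕ} (A B X D : Matrix (Fin n) (Fin n) ℂ)
    (hA : GroupInvertible A)
    (hX : IsCoreInv A X) (hD : IsMPInv A D) :
    (X * A = X * B ∧ A * X = B * X) ↔ (D * A = D * B ∧ A ^ 2 = B * A) := by
  have hAX : A * X = A * D := hX.mul_eq_mul hD
  have hADX : A * D * X = X := hX.2.mul_eq_self hD.1
  have hXAA : X * A * A = A := hX.mul_mul_self hA hD
  have hDAX : D * (A * X) = D := by rw [hAX, ← mul_assoc, hD.2.1]
  have hXAD : X * (A * D) = X :=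
    calc X * (A * D) = X * A * (A * D * X) := by rw [hADX, ← hAX, mul_assoc]
      _ = X * A * A * (D * X) := by simp only [mul_assoc]
      _ = X := by rw [hXAA, ← mul_assoc, hADX]
  rw [sq]
  constructor
  · rintro ⟨hXAB, hAXB⟩
    refine ⟨mul_eq_mul_of_mul_mul_eq_self hDAX hXAB, ?_⟩
    calc A * A = A * X * (A * A) := by rw [mul_assoc, ← mul_assoc X, hXAA]
      _ = B * A := by rw [hAXB, mul_assoc, ← mul_assoc X, hXAA]
  · rintro ⟨hDAB, hsq⟩
    refine ⟨mul_eq_mul_of_mul_mul_eq_self hXAD hDAB, ?_⟩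
    calc A * X = A * A * (D * X) := by rw [mul_assoc, ← mul_assoc A D, hADX]
      _ = B * X := by rw [hsq, mul_assoc, ← mul_assoc A, hADX]

/-- For matrices of index at most one, `A ≤^⊕ B` iff `A† A = A† B` and `A² = B A`. -/
theorem core_order_iff_mp_and_sq {n : ℕ} (A B X D : Matrix (Fin n) (Fin n) ℂ)
    (hA : GroupInvertible A) (hB : GroupInvertible B)
    (hX : IsCoreInv A X) (hD : IsMPInv A D) :
    (X * A = X * B ∧ A * X = B * X) ↔ (D * A = D * B ∧ A ^ 2 = B * A) :=
  core_order_iff_mp_and_sq_general A B X D hA hX hD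

end CoreEP
end
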